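/- arXiv:2101.00730 — 5 statements merged into one kernel-verified Lean document; each statement's English description precedes it below -/
import Mathlib

section
/- Macroscopic Frostman lemma: fix an integer n ≥ 1 and ρ ≥ 1, and let E be a subset of the n-th shell Ξ_n := (−e^{n+1}, −e^{n}] ∪ [e^{n}, e^{n+1}) of ℝ. Let μ be a finite Borel measure on ℝ and set K := sup{ μ(Q)/Leb(Q) : Q a Borel subset of Ξ_n with Leb(Q) ≥ 1 }. If 0 < K < ∞, then ν_{n,ρ}(E) ≥ K^{−1} e^{−nρ} μ(E). -/
open Real Set MeasureTheory

noncomputable section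

/-- The `n`-th shell region `Ξ_n := (−e^{n+1}, −e^{n}] ∪ [e^{n}, e^{n+1})` of `ℝ`. -/
def shellRegion (n : ℕ) : Set ℝ :=
  Set.Ioc (-(Real.exp (n + 1))) (-(Real.exp n)) ∪ Set.Ico (Real.exp n) (Real.exp (n + 1))

/-- The `n`-th shell of a set `A ⊆ ℝ`. -/
def shell (n : ℕ) (A : Set ℝ) : Set ℝ := A ∩ shellRegion n

/-- The `ρ`-dimensional Hausdorff content of the `n`-th shell of `A`, computed with
cutoff `c₀`. -/
def nuCont (c₀ : ℝ) (n : ℕ) (ρ : ℝ) (A : Set ℝ) : ℝ :=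
  sInf {r : ℝ | ∃ (m : ℕ) (a b : Fin m → ℝ),
    (∀ i, c₀ ≤ b i - a i) ∧
    shell n A ⊆ ⋃ i, Set.Icc (a i) (b i) ∧
    r = ∑ i, ((b i - a i) / Real.exp n) ^ ρ}

lemma shellRegion_measurable (n : ℕ) : MeasurableSet (shellRegion n) :=
  measurableSet_Ioc.union measurableSet_Ico

lemma shellRegion_vol_lt_top (n : ℕ) : volume (shellRegion n) < ⊤ := by
  refine lt_of_le_of_lt (measure_union_le _ _) ?_
  rw [Real.volume_Ioc, Real.volume_Ico]
  exact ENNReal.add_lt_top.mpr ⟨ENNReal.ofReal_lt_top, ENNReal.ofReal_lt_top⟩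

lemma exp_gap (n : ℕ) (hn : 1 ≤ n) : Real.exp n + 2 < Real.exp (n + 1) := by
  have h1 : Real.exp 1 ≤ Real.exp n := Real.exp_le_exp.mpr (by exact_mod_cast hn)
  have h2 : (2 : ℝ) < Real.exp 1 := by
    have := Real.exp_one_gt_d9; linarith
  have h3 : Real.exp ((n : ℝ) + 1) = Real.exp n * Real.exp 1 := by rw [Real.exp_add]
  nlinarith [Real.exp_pos ((n : ℝ))]

lemma Icc_subset_shellRegion (n : ℕ) (hn : 1 ≤ n) :
    Set.Icc (Real.exp n) (Real.exp n + 2) ⊆ shellRegion n := by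
  intro x hx
  exact Or.inr ⟨hx.1, lt_of_le_of_lt hx.2 (exp_gap n hn)⟩

lemma key_bound (n : ℕ) (hn : 1 ≤ n) (μ : Measure ℝ) [IsFiniteMeasure μ] (K : ℝ)
    (hKpos : 0 < K)
    (hub : ∀ Q : Set ℝ, MeasurableSet Q → Q ⊆ shellRegion n → 1 ≤ volume Q →
      (μ Q).toReal ≤ K * (volume Q).toReal)
    (a b : ℝ) (hab : 1 ≤ b - a) :
    (μ (Set.Icc a b ∩ shellRegion n)).toReal ≤ K * (b - a) := by
  set Q₀ : Set ℝ := Set.Icc a b ∩ shellRegion n with hQ₀def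
  have hQ₀m : MeasurableSet Q₀ := measurableSet_Icc.inter (shellRegion_measurable n)
  have hQ₀sub : Q₀ ⊆ shellRegion n := inter_subset_right
  have hQ₀vol_le : volume Q₀ ≤ ENNReal.ofReal (b - a) := by
    calc volume Q₀ ≤ volume (Set.Icc a b) := measure_mono inter_subset_left
      _ = ENNReal.ofReal (b - a) := Real.volume_Icc
  have hQ₀fin : volume Q₀ ≠ ⊤ := (lt_of_le_of_lt hQ₀vol_le ENNReal.ofReal_lt_top).ne
  by_cases hcase : 1 ≤ volume Q₀
  · have h1 := hub Q₀ hQ₀m hQ₀sub hcase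
    have h2 : (volume Q₀).toReal ≤ b - a := by
      have := ENNReal.toReal_mono (by simp) hQ₀vol_le
      rwa [ENNReal.toReal_ofReal (by linarith)] at this
    nlinarith [ENNReal.toReal_nonneg (a := volume Q₀)]
  · push_neg at hcase
    set r : ℝ := (volume Q₀).toReal with hrdef
    have hr0 : 0 ≤ r := ENNReal.toReal_nonneg
    have hr1 : r < 1 := by
      have := (ENNReal.toReal_lt_toReal hQ₀fin ENNReal.one_ne_top).mpr hcase
      simpa using this
    have hQ₀vol : volume Q₀ = ENNReal.ofReal r := (ENNReal.ofReal_toReal hQ₀fin).symm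
    set c : ℝ := Real.exp n with hcdef
    set f : ℝ → ℝ := fun t => (t - c) - max (min t b - max c a) 0 with hfdef
    -- volume formula
    have hvol : ∀ t, c ≤ t → volume (Set.Icc c t \ Set.Icc a b) = ENNReal.ofReal (f t) := by
      intro t ht
      have hmeas : MeasurableSet (Set.Icc c t ∩ Set.Icc a b) :=
        measurableSet_Icc.inter measurableSet_Icc
      have hfin : volume (Set.Icc c t ∩ Set.Icc a b) ≠ ⊤ :=
        (lt_of_le_of_lt (measure_mono inter_subset_left)
          (by rw [Real.volume_Icc]; exact ENNReal.ofReal_lt_top)).ne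
      have hdiff : Set.Icc c t \ Set.Icc a b = Set.Icc c t \ (Set.Icc c t ∩ Set.Icc a b) :=
        (Set.diff_self_inter).symm
      rw [hdiff, measure_diff inter_subset_left hmeas.nullMeasurableSet hfin]
      have hint : Set.Icc c t ∩ Set.Icc a b = Set.Icc (max c a) (min t b) := by
        rw [Set.Icc_inter_Icc]
      rw [hint, Real.volume_Icc, Real.volume_Icc]
      rcases le_or_gt (min t b - max c a) 0 with h | h
      · rw [ENNReal.ofReal_eq_zero.mpr h, tsub_zero]
        congr 1
        simp only [hfdef]
        rw [max_eq_right h, sub_zero]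
      · rw [← ENNReal.ofReal_sub _ h.le]
        congr 1
        simp only [hfdef]
        rw [max_eq_left h.le]
    have hfc : f c = 0 := by
      have h1 : min c b ≤ max c a := le_trans (min_le_left _ _) (le_max_left _ _)
      simp only [hfdef]
      rw [max_eq_right (by linarith)]
      ring
    have hfc2 : f (c + 2) = 2 - max (min (c + 2) b - max c a) 0 := by
      simp only [hfdef]; ring
    have hover : max (min (c + 2) b - max c a) 0 ≤ r := by
      rcases le_or_gt (min (c + 2) b - max c a) 0 with h | h
      · rw [max_eq_right h]; exact hr0
      · rw [max_eq_left h.le]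
        have hsub2 : Set.Icc (max c a) (min (c + 2) b) ⊆ Q₀ := by
          intro x hx
          have h1 := hx.1
          have h2 := hx.2
          have h3 : a ≤ max c a := le_max_right c a
          have h4 : c ≤ max c a := le_max_left c a
          have h5 : min (c + 2) b ≤ b := min_le_right _ _
          have h6 : min (c + 2) b ≤ c + 2 := min_le_left _ _
          exact ⟨⟨by linarith, by linarith⟩,
            Icc_subset_shellRegion n hn ⟨by linarith, by linarith⟩⟩
        have hm := measure_mono (μ := volume) hsub2
        rw [Real.volume_Icc, hQ₀vol] at hm
        exact (ENNReal.ofReal_le_ofReal_iff hr0).mp hm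
    have hc2 : c ≤ c + 2 := by linarith
    have hcont : ContinuousOn f (Set.Icc c (c + 2)) := by
      apply Continuous.continuousOn
      simp only [hfdef]
      fun_prop
    have hmem : (1 - r) ∈ Set.Icc (f c) (f (c + 2)) := by
      constructor
      · rw [hfc]; linarith
      · rw [hfc2]; linarith
    obtain ⟨t, ht, hft⟩ := intermediate_value_Icc hc2 hcont hmem
    set D : Set ℝ := Set.Icc c t \ Set.Icc a b with hDdef
    have hDm : MeasurableSet D := measurableSet_Icc.diff measurableSet_Icc
    have hDvol : volume D = ENNReal.ofReal (1 - r) := by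
      rw [hvol t ht.1, hft]
    have hDsub : D ⊆ shellRegion n := by
      intro x hx
      refine Icc_subset_shellRegion n hn ⟨hx.1.1, le_trans hx.1.2 ht.2⟩
    set Q : Set ℝ := Q₀ ∪ D with hQdef
    have hQm : MeasurableSet Q := hQ₀m.union hDm
    have hQsub : Q ⊆ shellRegion n := union_subset hQ₀sub hDsub
    have hdisj : Disjoint Q₀ D := by
      rw [Set.disjoint_left]
      intro x hx hxD
      exact hxD.2 hx.1
    have hQvol : volume Q = 1 := by
      rw [hQdef, measure_union hdisj hDm, hQ₀vol, hDvol,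
        ← ENNReal.ofReal_add hr0 (by linarith)]
      norm_num
    have h1 := hub Q hQm hQsub (by rw [hQvol])
    rw [hQvol] at h1
    simp only [ENNReal.toReal_one, mul_one] at h1
    have h2 : (μ Q₀).toReal ≤ (μ Q).toReal :=
      ENNReal.toReal_mono (measure_ne_top μ _) (measure_mono subset_union_left)
    nlinarith

/-- Macroscopic Frostman lemma: if `E` is a subset of the `n`-th shell region,
`μ` is a finite Borel measure, and `K` is the (finite, positive) supremum of
`μ(Q)/Leb(Q)` over Borel subsets `Q` of the shell region with `Leb(Q) ≥ 1`, then
`ν_{n,ρ}(E) ≥ K⁻¹ e^{−nρ} μ(E)`. -/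
theorem macro_frostman (n : ℕ) (hn : 1 ≤ n) (ρ : ℝ) (hρ : 1 ≤ ρ)
    (E : Set ℝ) (hE : E ⊆ shellRegion n)
    (μ : Measure ℝ) [IsFiniteMeasure μ] (K : ℝ) (hKpos : 0 < K)
    (hK : IsLUB {r : ℝ | ∃ Q : Set ℝ, MeasurableSet Q ∧ Q ⊆ shellRegion n ∧
        1 ≤ volume Q ∧ r = (μ Q).toReal / (volume Q).toReal} K) :
    K⁻¹ * Real.exp (-((n : ℝ) * ρ)) * (μ E).toReal ≤ nuCont 1 n ρ E := by
  have hub : ∀ Q : Set ℝ, MeasurableSet Q → Q ⊆ shellRegion n → 1 ≤ volume Q →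
      (μ Q).toReal ≤ K * (volume Q).toReal := by
    intro Q hQm hQs hQ1
    have hQfin : volume Q ≠ ⊤ := (lt_of_le_of_lt (measure_mono hQs)
      (shellRegion_vol_lt_top n)).ne
    have h1 : (1 : ℝ) ≤ (volume Q).toReal := by
      have := ENNReal.toReal_mono hQfin hQ1
      simpa using this
    have hmem : (μ Q).toReal / (volume Q).toReal ∈ {r : ℝ | ∃ Q : Set ℝ, MeasurableSet Q ∧
        Q ⊆ shellRegion n ∧ 1 ≤ volume Q ∧ r = (μ Q).toReal / (volume Q).toReal} :=
      ⟨Q, hQm, hQs, hQ1, rfl⟩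
    have hle := hK.1 hmem
    rw [div_le_iff₀ (by linarith)] at hle
    nlinarith
  have hshell : shell n E = E := Set.inter_eq_left.mpr hE
  rw [nuCont]
  apply le_csInf
  · refine ⟨∑ i : Fin 2,
      ((![-(Real.exp n), Real.exp (n + 1)] i - ![-(Real.exp (n + 1)), Real.exp n] i) /
        Real.exp n) ^ ρ, 2,
      ![-(Real.exp (n + 1)), Real.exp n], ![-(Real.exp n), Real.exp (n + 1)], ?_, ?_, rfl⟩
    · intro i
      have hg := exp_gap n hn
      fin_cases i <;> simp <;> nlinarith
    · rw [hshell]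
      intro x hx
      rcases hE hx with h | h
      · refine mem_iUnion.mpr ⟨0, ?_⟩
        simp only [Matrix.cons_val_zero]
        exact ⟨h.1.le, h.2⟩
      · refine mem_iUnion.mpr ⟨1, ?_⟩
        simp only [Matrix.cons_val_one, Matrix.head_cons]
        exact ⟨h.1, h.2.le⟩
  · rintro x ⟨m, a, b, hlen, hcov, rfl⟩
    rw [hshell] at hcov
    have hEsub : E ⊆ ⋃ i, (Set.Icc (a i) (b i) ∩ shellRegion n) := by
      intro x hx
      obtain ⟨i, hi⟩ := mem_iUnion.mp (hcov hx)
      exact mem_iUnion.mpr ⟨i, hi, hE hx⟩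
    have h1 : μ E ≤ ∑ i, μ (Set.Icc (a i) (b i) ∩ shellRegion n) :=
      (measure_mono hEsub).trans (measure_iUnion_fintype_le _ _)
    have h2 : (μ E).toReal ≤ ∑ i, (μ (Set.Icc (a i) (b i) ∩ shellRegion n)).toReal := by
      rw [← ENNReal.toReal_sum (fun i _ => measure_ne_top μ _)]
      exact ENNReal.toReal_mono
        (ENNReal.sum_ne_top.mpr (fun i _ => measure_ne_top μ _)) h1
    have h4 : (μ E).toReal ≤ ∑ i, K * (b i - a i) :=
      h2.trans (Finset.sum_le_sum fun i _ =>
        key_bound n hn μ K hKpos hub (a i) (b i) (hlen i))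
    have h5 : ∀ i, Real.exp (-((n : ℝ) * ρ)) * (b i - a i) ≤
        ((b i - a i) / Real.exp n) ^ ρ := by
      intro i
      have hL : 1 ≤ b i - a i := hlen i
      have hpos : (0 : ℝ) < Real.exp n := Real.exp_pos _
      have hdiv : ((b i - a i) / Real.exp n) ^ ρ = (b i - a i) ^ ρ / (Real.exp n) ^ ρ :=
        Real.div_rpow (by linarith) hpos.le ρ
      have hexp : (Real.exp (n : ℝ)) ^ ρ = Real.exp ((n : ℝ) * ρ) :=
        (Real.exp_mul _ _).symm
      have hmono : (b i - a i) ≤ (b i - a i) ^ ρ := by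
        calc (b i - a i) = (b i - a i) ^ (1 : ℝ) := (Real.rpow_one _).symm
          _ ≤ (b i - a i) ^ ρ := Real.rpow_le_rpow_of_exponent_le hL hρ
      rw [hdiv, hexp, Real.exp_neg, div_eq_mul_inv]
      have hip : 0 < (Real.exp ((n : ℝ) * ρ))⁻¹ := by positivity
      nlinarith
    calc K⁻¹ * Real.exp (-((n : ℝ) * ρ)) * (μ E).toReal
        ≤ K⁻¹ * Real.exp (-((n : ℝ) * ρ)) * ∑ i, K * (b i - a i) := by
          apply mul_le_mul_of_nonneg_left h4 (by positivity)
      _ = ∑ i, Real.exp (-((n : ℝ) * ρ)) * (b i - a i) := by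
          rw [Finset.mul_sum]
          refine Finset.sum_congr rfl fun i _ => ?_
          field_simp
      _ ≤ ∑ i, ((b i - a i) / Real.exp n) ^ ρ :=
          Finset.sum_le_sum fun i _ => h5 i
end
end

section
/- Directed-polymer comparison inequality: let n ≥ 2 be an even integer and β ≥ 0. For every pair of environments Ξ, Ξ′ : ℕ × ℤ → ℝ, one has log Z_n^{Ξ}(β) ≥ log Z_n^{Ξ′}(β) − β · d_n(Ξ, Ξ′) · √(Overlap_{Ξ′}(β)). -/
noncomputable section

open Finset

/-- Position after `i` steps of the nearest-neighbour walk on `ℤ` started at `0`,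
with step signs `ε` (a `+1` step when `ε j = true`, a `−1` step otherwise). -/
def walk (n : ℕ) (ε : Fin n → Bool) (i : ℕ) : ℤ :=
  ∑ j : Fin n, if (j : ℕ) < i then (if ε j then 1 else -1) else 0

/-- Energy `Σ_{i=1}^n Ξ(i, S_i)` of the path with step signs `ε` in the
environment `Ξ`. -/
def pathEnergy (n : ℕ) (Ξ : ℕ × ℤ → ℝ) (ε : Fin n → Bool) : ℝ :=
  ∑ i ∈ Finset.Icc 1 n, Ξ (i, walk n ε i)

/-- Point-to-point polymer partition function
`Z_n^Ξ(β) = E_S[exp(β Σ_{i=1}^n Ξ(i,S_i)) 1_{S_n = 0}]`, where `E_S` is the uniform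
average over the `2^n` nearest-neighbour paths from `0`. -/
def Zn (n : ℕ) (β : ℝ) (Ξ : ℕ × ℤ → ℝ) : ℝ :=
  ((2 : ℝ) ^ n)⁻¹ * ∑ ε : Fin n → Bool,
    if walk n ε n = 0 then Real.exp (β * pathEnergy n Ξ ε) else 0

/-- Distance `d_n(Ξ,Ξ')` between two environments:
`d_n(Ξ,Ξ')² = Σ_{i=1}^n Σ_{|x| ≤ i} (Ξ(i,x) − Ξ'(i,x))²`. -/
def dEnv (n : ℕ) (Ξ Ξ' : ℕ × ℤ → ℝ) : ℝ :=
  Real.sqrt (∑ i ∈ Finset.Icc 1 n, ∑ x ∈ Finset.Icc (-(i : ℤ)) (i : ℤ),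
    (Ξ (i, x) - Ξ' (i, x)) ^ 2)

/-- `L_n = Σ_{i=1}^n 1_{S_i¹ = S_i²}`, the number of coincidences of the two paths. -/
def overlapCount (n : ℕ) (ε₁ ε₂ : Fin n → Bool) : ℕ :=
  ((Finset.Icc 1 n).filter fun i => walk n ε₁ i = walk n ε₂ i).card

/-- `E_{S¹,S²}[L_n · exp(β Σ_{i=1}^n (Ξ(i,S_i¹) + Ξ(i,S_i²))) · 1_{S_n¹ = S_n² = 0}]`,
the joint expectation over two independent `n`-step simple random walks. -/
def replicaAvg (n : ℕ) (β : ℝ) (Ξ : ℕ × ℤ → ℝ) : ℝ :=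
  ((2 : ℝ) ^ n * (2 : ℝ) ^ n)⁻¹ * ∑ ε₁ : Fin n → Bool, ∑ ε₂ : Fin n → Bool,
    if walk n ε₁ n = 0 ∧ walk n ε₂ n = 0 then
      (overlapCount n ε₁ ε₂ : ℝ) * Real.exp (β * (pathEnergy n Ξ ε₁ + pathEnergy n Ξ ε₂))
    else 0

/-- The replica overlap `Overlap_Ξ(β)`. -/
def Overlap (n : ℕ) (β : ℝ) (Ξ : ℕ × ℤ → ℝ) : ℝ :=
  replicaAvg n β Ξ / (Zn n β Ξ) ^ 2

lemma abs_walk_le (n : ℕ) (ε : Fin n → Bool) (i : ℕ) : |walk n ε i| ≤ (i : ℤ) := by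
  have h1 : |walk n ε i| ≤ ∑ j : Fin n, |if (j : ℕ) < i then (if ε j then (1:ℤ) else -1) else 0| :=
    Finset.abs_sum_le_sum_abs _ _
  have h2 : ∀ j : Fin n, |if (j : ℕ) < i then (if ε j then (1:ℤ) else -1) else 0|
      = (if (j : ℕ) < i then (1:ℤ) else 0) := by
    intro j; by_cases h : (j : ℕ) < i <;> by_cases he : ε j <;> simp [h, he]
  rw [Finset.sum_congr rfl (fun j _ => h2 j)] at h1
  have h3 : ∑ j : Fin n, (if (j : ℕ) < i then (1:ℤ) else 0)
      = ((Finset.univ.filter fun j : Fin n => (j : ℕ) < i).card : ℤ) := by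
    simp [Finset.sum_boole]
  have h4 : (Finset.univ.filter fun j : Fin n => (j : ℕ) < i).card ≤ i := by
    have := Finset.card_le_card_of_injOn (s := Finset.univ.filter fun j : Fin n => (j : ℕ) < i)
      (t := Finset.range i) (fun j : Fin n => (j : ℕ))
      (fun j hj => Finset.mem_range.2 (Finset.mem_filter.1 hj).2)
      (fun a _ b _ h => Fin.val_injective h)
    simpa using this
  rw [h3] at h1
  exact h1.trans (by exact_mod_cast h4)

lemma walk_mem (n : ℕ) (ε : Fin n → Bool) (i : ℕ) :
    walk n ε i ∈ Finset.Icc (-(i : ℤ)) (i : ℤ) := by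
  have := abs_walk_le n ε i
  rw [Finset.mem_Icc]
  constructor <;> [exact neg_le_of_abs_le this; exact le_of_abs_le this]

lemma sum_alt (m : ℕ) : ∑ j ∈ Finset.range (2*m), (if j % 2 = 0 then (1:ℤ) else -1) = 0 := by
  induction m with
  | zero => simp
  | succ m ih =>
    have h : 2 * (m+1) = (2*m) + 1 + 1 := by ring
    rw [h, Finset.sum_range_succ, Finset.sum_range_succ, ih]
    have h1 : (2*m) % 2 = 0 := by omega
    have h2 : (2*m+1) % 2 = 1 := by omega
    simp [h1, h2]

lemma exists_zero_walk (n : ℕ) (hne : Even n) : ∃ ε : Fin n → Bool, walk n ε n = 0 := by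
  refine ⟨fun j => decide ((j : ℕ) % 2 = 0), ?_⟩
  obtain ⟨m, hm⟩ := hne
  have hm2 : n = 2 * m := by omega
  unfold walk
  have : ∀ j : Fin n, (if (j : ℕ) < n then (if (decide ((j:ℕ) % 2 = 0) : Bool) then (1:ℤ) else -1) else 0)
      = (if (j : ℕ) % 2 = 0 then (1:ℤ) else -1) := by
    intro j; simp [j.isLt]
  rw [Finset.sum_congr rfl (fun j _ => this j), Fin.sum_univ_eq_sum_range
    (fun j => if j % 2 = 0 then (1:ℤ) else -1), hm2, sum_alt]

lemma Zn_pos (n : ℕ) (hne : Even n) (β : ℝ) (Ξ : ℕ × ℤ → ℝ) : 0 < Zn n β Ξ := by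
  obtain ⟨ε₀, hε₀⟩ := exists_zero_walk n hne
  refine mul_pos (by positivity) (Finset.sum_pos' (fun ε _ => ?_) ⟨ε₀, Finset.mem_univ _, ?_⟩)
  · split <;> [exact (Real.exp_pos _).le; exact le_rfl]
  · simp [hε₀, Real.exp_pos]


/-- Directed-polymer comparison inequality: for every even `n ≥ 2`, every `β ≥ 0` and
every pair of environments `Ξ, Ξ'`,
`log Z_n^Ξ(β) ≥ log Z_n^{Ξ'}(β) − β d_n(Ξ,Ξ') √(Overlap_{Ξ'}(β))`. -/
theorem polymer_comparison (n : ℕ) (hn : 2 ≤ n) (hne : Even n) (β : ℝ) (hβ : 0 ≤ β)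
    (Ξ Ξ' : ℕ × ℤ → ℝ) :
    Real.log (Zn n β Ξ') - β * dEnv n Ξ Ξ' * Real.sqrt (Overlap n β Ξ')
      ≤ Real.log (Zn n β Ξ) := by
  classical
  set w : (Fin n → Bool) → ℝ :=
    fun ε => if walk n ε n = 0 then Real.exp (β * pathEnergy n Ξ' ε) else 0 with hwdef
  have hw0 : ∀ ε, 0 ≤ w ε := by
    intro ε; simp only [hwdef]; split <;> [exact (Real.exp_pos _).le; exact le_rfl]
  set W : ℝ := ∑ ε : Fin n → Bool, w ε with hWdef
  have hZ'pos : 0 < Zn n β Ξ' := Zn_pos n hne β Ξ'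
  have hZpos : 0 < Zn n β Ξ := Zn_pos n hne β Ξ
  have hZ'W : Zn n β Ξ' = ((2:ℝ)^n)⁻¹ * W := rfl
  have hWpos : 0 < W := by
    by_contra h
    push_neg at h
    have : Zn n β Ξ' ≤ 0 := by
      rw [hZ'W]; exact mul_nonpos_of_nonneg_of_nonpos (by positivity) h
    linarith
  set μ : (Fin n → Bool) → ℝ := fun ε => w ε / W with hμdef
  have hμ0 : ∀ ε, 0 ≤ μ ε := fun ε => div_nonneg (hw0 ε) hWpos.le
  have hμ1 : ∑ ε : Fin n → Bool, μ ε = 1 := by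
    simp only [hμdef, ← Finset.sum_div, ← hWdef, div_self hWpos.ne']
  set Δ : (Fin n → Bool) → ℝ :=
    fun ε => pathEnergy n Ξ ε - pathEnergy n Ξ' ε with hΔdef
  set T : ℝ := ∑ ε : Fin n → Bool, μ ε * Δ ε with hTdef
  -- Jensen step
  have hJ : Real.exp (β * T) ≤ ∑ ε : Fin n → Bool, μ ε * Real.exp (β * Δ ε) := by
    have h := convexOn_exp.map_sum_le (t := Finset.univ) (w := μ) (p := fun ε => β * Δ ε)
      (fun ε _ => hμ0 ε) hμ1 (fun ε _ => Set.mem_univ _)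
    have harg : ∑ ε : Fin n → Bool, μ ε • (β * Δ ε) = β * T := by
      rw [hTdef, Finset.mul_sum]
      exact Finset.sum_congr rfl fun ε _ => by simp [smul_eq_mul]; ring
    rw [harg] at h
    simpa [smul_eq_mul] using h
  have hkey : Zn n β Ξ' * Real.exp (β * T) ≤ Zn n β Ξ := by
    have hZΞ : Zn n β Ξ = ((2:ℝ)^n)⁻¹ * ∑ ε : Fin n → Bool, w ε * Real.exp (β * Δ ε) := by
      unfold Zn
      congr 1
      refine Finset.sum_congr rfl fun ε _ => ?_
      by_cases h : walk n ε n = 0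
      · simp only [hwdef, h, if_true, ← Real.exp_add]
        congr 1; simp only [hΔdef]; ring
      · simp [hwdef, h]
    have hfac : ∑ ε : Fin n → Bool, w ε * Real.exp (β * Δ ε)
        = W * ∑ ε : Fin n → Bool, μ ε * Real.exp (β * Δ ε) := by
      rw [Finset.mul_sum]
      refine Finset.sum_congr rfl fun ε _ => ?_
      simp only [hμdef]
      field_simp
    rw [hZΞ, hfac, hZ'W]
    calc ((2:ℝ)^n)⁻¹ * W * Real.exp (β * T)
        ≤ ((2:ℝ)^n)⁻¹ * W * ∑ ε : Fin n → Bool, μ ε * Real.exp (β * Δ ε) := by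
          apply mul_le_mul_of_nonneg_left hJ (by positivity)
      _ = ((2:ℝ)^n)⁻¹ * (W * ∑ ε : Fin n → Bool, μ ε * Real.exp (β * Δ ε)) := by ring
  have hlog : Real.log (Zn n β Ξ') + β * T ≤ Real.log (Zn n β Ξ) := by
    have := Real.log_le_log (by positivity) hkey
    rwa [Real.log_mul hZ'pos.ne' (Real.exp_pos _).ne', Real.log_exp] at this
  -- the occupation probabilities
  set p : ℕ → ℤ → ℝ :=
    fun i x => ∑ ε : Fin n → Bool, μ ε * (if walk n ε i = x then 1 else 0) with hpdef
  -- T as a sum over sites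
  have hT : T = ∑ i ∈ Finset.Icc 1 n, ∑ x ∈ Finset.Icc (-(i:ℤ)) (i:ℤ),
      (Ξ (i, x) - Ξ' (i, x)) * p i x := by
    have h1 : ∀ ε, Δ ε = ∑ i ∈ Finset.Icc 1 n, (Ξ (i, walk n ε i) - Ξ' (i, walk n ε i)) := by
      intro ε; simp only [hΔdef, pathEnergy, ← Finset.sum_sub_distrib]
    have h2 : ∀ ε (i : ℕ), (Ξ (i, walk n ε i) - Ξ' (i, walk n ε i))
        = ∑ x ∈ Finset.Icc (-(i:ℤ)) (i:ℤ),
            (if walk n ε i = x then (Ξ (i, x) - Ξ' (i, x)) else 0) := by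
      intro ε i
      rw [Finset.sum_ite_eq (Finset.Icc (-(i:ℤ)) (i:ℤ)) (walk n ε i)
        (fun x => Ξ (i, x) - Ξ' (i, x)), if_pos (walk_mem n ε i)]
    calc T = ∑ ε : Fin n → Bool, ∑ i ∈ Finset.Icc 1 n, ∑ x ∈ Finset.Icc (-(i:ℤ)) (i:ℤ),
        μ ε * (if walk n ε i = x then (Ξ (i, x) - Ξ' (i, x)) else 0) := by
          rw [hTdef]
          refine Finset.sum_congr rfl fun ε _ => ?_
          rw [h1 ε, Finset.mul_sum]
          refine Finset.sum_congr rfl fun i _ => ?_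
          rw [h2 ε i, Finset.mul_sum]
      _ = ∑ i ∈ Finset.Icc 1 n, ∑ x ∈ Finset.Icc (-(i:ℤ)) (i:ℤ), ∑ ε : Fin n → Bool,
        μ ε * (if walk n ε i = x then (Ξ (i, x) - Ξ' (i, x)) else 0) := by
          rw [Finset.sum_comm]
          exact Finset.sum_congr rfl fun i _ => Finset.sum_comm
      _ = ∑ i ∈ Finset.Icc 1 n, ∑ x ∈ Finset.Icc (-(i:ℤ)) (i:ℤ),
        (Ξ (i, x) - Ξ' (i, x)) * p i x := by
          refine Finset.sum_congr rfl fun i _ => Finset.sum_congr rfl fun x _ => ?_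
          rw [hpdef, Finset.mul_sum]
          refine Finset.sum_congr rfl fun ε _ => ?_
          split <;> ring
  -- Overlap as sum of squares of p
  have hOv : Overlap n β Ξ' = ∑ i ∈ Finset.Icc 1 n, ∑ x ∈ Finset.Icc (-(i:ℤ)) (i:ℤ),
      (p i x) ^ 2 := by
    have hindsum : ∀ (ε₁ ε₂ : Fin n → Bool),
        (∑ i ∈ Finset.Icc 1 n, ∑ x ∈ Finset.Icc (-(i:ℤ)) (i:ℤ),
          (μ ε₁ * (if walk n ε₁ i = x then (1:ℝ) else 0))
            * (μ ε₂ * (if walk n ε₂ i = x then (1:ℝ) else 0)))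
        = μ ε₁ * μ ε₂ * (overlapCount n ε₁ ε₂ : ℝ) := by
      intro ε₁ ε₂
      have hx : ∀ i : ℕ, (∑ x ∈ Finset.Icc (-(i:ℤ)) (i:ℤ),
          (μ ε₁ * (if walk n ε₁ i = x then (1:ℝ) else 0))
            * (μ ε₂ * (if walk n ε₂ i = x then (1:ℝ) else 0)))
          = μ ε₁ * μ ε₂ * (if walk n ε₁ i = walk n ε₂ i then (1:ℝ) else 0) := by
        intro i
        have hterm : ∀ x : ℤ, (μ ε₁ * (if walk n ε₁ i = x then (1:ℝ) else 0))
            * (μ ε₂ * (if walk n ε₂ i = x then (1:ℝ) else 0))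
            = (if walk n ε₁ i = x then
                (μ ε₁ * μ ε₂ * (if walk n ε₂ i = x then (1:ℝ) else 0)) else 0) := by
          intro x
          by_cases h : walk n ε₁ i = x
          · simp only [h, if_true]; ring
          · simp [h]
        rw [Finset.sum_congr rfl (fun x _ => hterm x),
          Finset.sum_ite_eq (Finset.Icc (-(i:ℤ)) (i:ℤ)) (walk n ε₁ i)
            (fun x => μ ε₁ * μ ε₂ * (if walk n ε₂ i = x then (1:ℝ) else 0)),
          if_pos (walk_mem n ε₁ i)]
        by_cases h : walk n ε₁ i = walk n ε₂ i
        · rw [if_pos h.symm, if_pos h]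
        · rw [if_neg (fun hh : walk n ε₂ i = walk n ε₁ i => h hh.symm), if_neg h]
      rw [Finset.sum_congr rfl (fun i _ => hx i), ← Finset.mul_sum]
      congr 1
      rw [Finset.sum_boole]
      unfold overlapCount
      norm_num
    have hsq : ∀ (i : ℕ) (x : ℤ), (p i x) ^ 2
        = ∑ ε₁ : Fin n → Bool, ∑ ε₂ : Fin n → Bool,
          (μ ε₁ * (if walk n ε₁ i = x then (1:ℝ) else 0))
            * (μ ε₂ * (if walk n ε₂ i = x then (1:ℝ) else 0)) := by
      intro i x
      rw [sq, hpdef, Finset.sum_mul_sum]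
    have hswap : ∑ i ∈ Finset.Icc 1 n, ∑ x ∈ Finset.Icc (-(i:ℤ)) (i:ℤ), (p i x) ^ 2
        = ∑ ε₁ : Fin n → Bool, ∑ ε₂ : Fin n → Bool,
            ∑ i ∈ Finset.Icc 1 n, ∑ x ∈ Finset.Icc (-(i:ℤ)) (i:ℤ),
          (μ ε₁ * (if walk n ε₁ i = x then (1:ℝ) else 0))
            * (μ ε₂ * (if walk n ε₂ i = x then (1:ℝ) else 0)) := by
      calc ∑ i ∈ Finset.Icc 1 n, ∑ x ∈ Finset.Icc (-(i:ℤ)) (i:ℤ), (p i x) ^ 2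
          = ∑ i ∈ Finset.Icc 1 n, ∑ ε₁ : Fin n → Bool, ∑ ε₂ : Fin n → Bool,
              ∑ x ∈ Finset.Icc (-(i:ℤ)) (i:ℤ),
            (μ ε₁ * (if walk n ε₁ i = x then (1:ℝ) else 0))
              * (μ ε₂ * (if walk n ε₂ i = x then (1:ℝ) else 0)) := by
            refine Finset.sum_congr rfl fun i _ => ?_
            rw [Finset.sum_congr rfl (fun x hx => hsq i x), Finset.sum_comm]
            exact Finset.sum_congr rfl fun ε₁ _ => Finset.sum_comm
        _ = _ := by
            rw [Finset.sum_comm]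
            exact Finset.sum_congr rfl fun ε₁ _ => Finset.sum_comm
    rw [hswap, Finset.sum_congr rfl fun ε₁ _ =>
      Finset.sum_congr rfl fun ε₂ _ => hindsum ε₁ ε₂]
    -- now express the right side via replicaAvg
    have hw2 : ∀ (ε₁ ε₂ : Fin n → Bool),
        (if walk n ε₁ n = 0 ∧ walk n ε₂ n = 0 then
          (overlapCount n ε₁ ε₂ : ℝ)
            * Real.exp (β * (pathEnergy n Ξ' ε₁ + pathEnergy n Ξ' ε₂))
        else 0) = (overlapCount n ε₁ ε₂ : ℝ) * (w ε₁ * w ε₂) := by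
      intro ε₁ ε₂
      by_cases h1 : walk n ε₁ n = 0 <;> by_cases h2 : walk n ε₂ n = 0 <;>
        simp only [hwdef, h1, h2, if_true, if_false, true_and, false_and, and_true, and_false,
          mul_zero, zero_mul, if_neg, ite_true, ite_false]
      · rw [mul_add, Real.exp_add]
      all_goals simp [h1, h2]
    have hrep : replicaAvg n β Ξ' = ((2:ℝ)^n * (2:ℝ)^n)⁻¹
        * ∑ ε₁ : Fin n → Bool, ∑ ε₂ : Fin n → Bool,
            (overlapCount n ε₁ ε₂ : ℝ) * (w ε₁ * w ε₂) := by
      unfold replicaAvg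
      congr 1
      exact Finset.sum_congr rfl fun ε₁ _ => Finset.sum_congr rfl fun ε₂ _ => hw2 ε₁ ε₂
    have hμw : ∀ (ε₁ ε₂ : Fin n → Bool),
        μ ε₁ * μ ε₂ * (overlapCount n ε₁ ε₂ : ℝ)
        = ((overlapCount n ε₁ ε₂ : ℝ) * (w ε₁ * w ε₂)) / W^2 := by
      intro ε₁ ε₂
      simp only [hμdef]
      field_simp
    rw [Finset.sum_congr rfl fun ε₁ _ => Finset.sum_congr rfl fun ε₂ _ => hμw ε₁ ε₂]
    rw [Finset.sum_congr rfl fun (ε₁ : Fin n → Bool) _ => (Finset.sum_div _ _ (W^2)).symm,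
      ← Finset.sum_div]
    unfold Overlap
    rw [hrep]
    have hWZ : W = (2:ℝ)^n * Zn n β Ξ' := by
      rw [hZ'W]; field_simp
    rw [hWZ, mul_pow, ← div_div]
    congr 1
    rw [inv_mul_eq_div, sq]
  have hOvnn : 0 ≤ Overlap n β Ξ' := by
    rw [hOv]
    exact Finset.sum_nonneg fun i _ => Finset.sum_nonneg fun x _ => sq_nonneg _
  -- Cauchy–Schwarz
  have hCS : T ^ 2 ≤ (dEnv n Ξ Ξ')^2 * Overlap n β Ξ' := by
    have hds : (dEnv n Ξ Ξ')^2 = ∑ i ∈ Finset.Icc 1 n, ∑ x ∈ Finset.Icc (-(i:ℤ)) (i:ℤ),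
        (Ξ (i, x) - Ξ' (i, x)) ^ 2 := by
      unfold dEnv
      rw [Real.sq_sqrt]
      exact Finset.sum_nonneg fun i _ => Finset.sum_nonneg fun x _ => sq_nonneg _
    rw [hds, hOv, hT]
    set P : Finset ((_ : ℕ) × ℤ) := (Finset.Icc 1 n).sigma fun i => Finset.Icc (-(i:ℤ)) (i:ℤ)
      with hPdef
    have e1 : ∑ i ∈ Finset.Icc 1 n, ∑ x ∈ Finset.Icc (-(i:ℤ)) (i:ℤ),
        (Ξ (i, x) - Ξ' (i, x)) * p i x
        = ∑ q ∈ P, (Ξ (q.1, q.2) - Ξ' (q.1, q.2)) * p q.1 q.2 := by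
      rw [hPdef, Finset.sum_sigma]
    have e2 : ∑ i ∈ Finset.Icc 1 n, ∑ x ∈ Finset.Icc (-(i:ℤ)) (i:ℤ),
        (Ξ (i, x) - Ξ' (i, x)) ^ 2
        = ∑ q ∈ P, (Ξ (q.1, q.2) - Ξ' (q.1, q.2)) ^ 2 := by
      rw [hPdef, Finset.sum_sigma]
    have e3 : ∑ i ∈ Finset.Icc 1 n, ∑ x ∈ Finset.Icc (-(i:ℤ)) (i:ℤ), (p i x) ^ 2
        = ∑ q ∈ P, (p q.1 q.2) ^ 2 := by
      rw [hPdef, Finset.sum_sigma]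
    rw [e1, e2, e3]
    exact Finset.sum_mul_sq_le_sq_mul_sq P _ _
  -- conclude
  have habs : |T| ≤ dEnv n Ξ Ξ' * Real.sqrt (Overlap n β Ξ') := by
    have h0 : 0 ≤ dEnv n Ξ Ξ' * Real.sqrt (Overlap n β Ξ') :=
      mul_nonneg (Real.sqrt_nonneg _) (Real.sqrt_nonneg _)
    have h1 : T^2 ≤ (dEnv n Ξ Ξ' * Real.sqrt (Overlap n β Ξ'))^2 := by
      rw [mul_pow, Real.sq_sqrt hOvnn]
      exact hCS
    calc |T| = Real.sqrt (T^2) := (Real.sqrt_sq_eq_abs T).symm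
      _ ≤ Real.sqrt ((dEnv n Ξ Ξ' * Real.sqrt (Overlap n β Ξ'))^2) := Real.sqrt_le_sqrt h1
      _ = dEnv n Ξ Ξ' * Real.sqrt (Overlap n β Ξ') := Real.sqrt_sq h0
  have hfin : -(β * dEnv n Ξ Ξ' * Real.sqrt (Overlap n β Ξ')) ≤ β * T := by
    have : -(dEnv n Ξ Ξ' * Real.sqrt (Overlap n β Ξ')) ≤ T := (abs_le.1 habs).1
    calc -(β * dEnv n Ξ Ξ' * Real.sqrt (Overlap n β Ξ'))
        = β * (-(dEnv n Ξ Ξ' * Real.sqrt (Overlap n β Ξ'))) := by ring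
      _ ≤ β * T := mul_le_mul_of_nonneg_left this hβ
  linarith
end
end

section
/- For every integer k ≥ 1 and every real number a with 0 < a < k, Σ_{λ ⊢ k} ∏_{j=2}^{k} ( a^{(j−1) m_j(λ)} · k^{−(j−2) m_j(λ)} / m_j(λ)! ) ≤ exp( a + a²/(k − a) ), where the sum runs over all partitions λ of k. -/
open Finset

/-- For every integer `k ≥ 1` and every real `a` with `0 < a < k`,
`Σ_{λ ⊢ k} ∏_{j=2}^{k} a^{(j−1)m_j(λ)} k^{−(j−2)m_j(λ)} / m_j(λ)! ≤ exp(a + a²/(k−a))`,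
where `m_j(λ)` is the number of parts of the partition `λ` equal to `j`. -/
theorem partition_sum_bound (k : ℕ) (hk : 1 ≤ k) (a : ℝ) (ha : 0 < a) (hak : a < k) :
    ∑ p : Nat.Partition k, ∏ j ∈ Finset.Icc 2 k,
        (a ^ ((j - 1) * p.parts.count j) *
            (k : ℝ) ^ (-(((j : ℤ) - 2) * (p.parts.count j : ℤ))) /
          (Nat.factorial (p.parts.count j) : ℝ))
      ≤ Real.exp (a + a ^ 2 / ((k : ℝ) - a)) := by
  classical
  have hk0 : (0:ℝ) < k := ha.trans hak
  set x : ℕ → ℝ := fun j => a ^ (j-1) * ((k:ℝ) ^ (j-2))⁻¹ with hx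
  have hxnn : ∀ j, 0 ≤ x j := by
    intro j
    show 0 ≤ a ^ (j-1) * ((k:ℝ) ^ (j-2))⁻¹
    positivity
  -- rewrite each summand
  have hterm : ∀ j ∈ Finset.Icc 2 k, ∀ m : ℕ,
      a ^ ((j-1)*m) * (k:ℝ) ^ (-(((j:ℤ)-2) * (m:ℤ))) / (m.factorial : ℝ)
      = (x j)^m / m.factorial := by
    intro j hj m
    have hj2 : 2 ≤ j := (Finset.mem_Icc.1 hj).1
    have h2 : ((j:ℤ) - 2) = ((j - 2 : ℕ) : ℤ) := by push_cast [Nat.cast_sub hj2]; ring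
    rw [h2, ← Int.natCast_mul, zpow_neg, zpow_natCast]
    show _ = (a ^ (j-1) * ((k:ℝ) ^ (j-2))⁻¹)^m / (m.factorial : ℝ)
    rw [mul_pow, pow_mul, inv_pow, pow_mul]
  -- count bound
  have hcount_le : ∀ (p : Nat.Partition k) (j : ℕ), p.parts.count j ≤ k := by
    intro p j
    refine (Multiset.count_le_card _ _).trans ?_
    have := Multiset.card_nsmul_le_sum (s := p.parts) (a := 1)
      (fun y hy => p.parts_pos hy)
    simpa [p.parts_sum] using this
  -- counts for large/zero j
  have hcount_out : ∀ (p : Nat.Partition k) (j : ℕ), j = 0 ∨ k < j → p.parts.count j = 0 := by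
    intro p j hj
    rw [Multiset.count_eq_zero]
    intro hmem
    rcases hj with h0 | hlt
    · exact absurd (p.parts_pos hmem) (by omega)
    · have : j ≤ k := by
        have := Multiset.le_sum_of_mem hmem
        rwa [p.parts_sum] at this
      omega
  -- the injection into Finset.pi
  set F : Nat.Partition k → (∀ j ∈ Finset.Icc 2 k, ℕ) :=
    fun p => fun j _ => p.parts.count j with hF
  have hFmem : ∀ p, F p ∈ (Finset.Icc 2 k).pi (fun _ => Finset.range (k+1)) := by
    intro p
    rw [Finset.mem_pi]
    intro j hj
    rw [Finset.mem_range]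
    exact Nat.lt_succ_of_le (hcount_le p j)
  have hFinj : ∀ p q : Nat.Partition k, F p = F q → p = q := by
    intro p q hpq
    have hcnt : ∀ j, 2 ≤ j → j ≤ k → p.parts.count j = q.parts.count j := by
      intro j h2 hk'
      have := congrFun (congrFun hpq j) (Finset.mem_Icc.2 ⟨h2, hk'⟩)
      simpa [hF] using this
    have hne1 : ∀ j, j ≠ 1 → p.parts.count j = q.parts.count j := by
      intro j hj1
      rcases Nat.lt_or_ge j 2 with h | h
      · interval_cases j
        · rw [hcount_out p 0 (Or.inl rfl), hcount_out q 0 (Or.inl rfl)]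
        · exact absurd rfl hj1
      · rcases le_or_gt j k with h' | h'
        · exact hcnt j h h'
        · rw [hcount_out p j (Or.inr h'), hcount_out q j (Or.inr h')]
    -- the filtered multisets agree
    have hfil : p.parts.filter (· ≠ 1) = q.parts.filter (· ≠ 1) := by
      ext j
      rw [Multiset.count_filter, Multiset.count_filter]
      by_cases hj : j ≠ 1
      · simp [hj, hne1 j hj]
      · simp [hj]
    have hsum : ∀ r : Nat.Partition k,
        r.parts.count 1 + (r.parts.filter (· ≠ 1)).sum = k := by
      intro r
      have h1 : r.parts.filter (· = 1) + r.parts.filter (fun y => ¬ (y = 1)) = r.parts :=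
        Multiset.filter_add_not _ _
      have h2 : (r.parts.filter (· = 1)).sum = r.parts.count 1 := by
        rw [Multiset.filter_eq', Multiset.sum_replicate, smul_eq_mul, mul_one]
      have := congrArg Multiset.sum h1
      rw [Multiset.sum_add, h2, r.parts_sum] at this
      simpa using this
    have h1 : p.parts.count 1 = q.parts.count 1 := by
      have hp := hsum p
      have hq := hsum q
      rw [hfil] at hp
      omega
    have : p.parts = q.parts := by
      ext j
      by_cases hj : j = 1
      · subst hj; exact h1
      · exact hne1 j hj
    exact Nat.Partition.ext this
  -- step 1: bound the sum by the full pi-sum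
  set f : ℕ → ℕ → ℝ := fun j m => (x j)^m / m.factorial with hf
  have hfnn : ∀ j m, 0 ≤ f j m := by
    intro j m
    show 0 ≤ (x j)^m / (m.factorial : ℝ)
    have := hxnn j
    positivity
  have step1 : ∑ p : Nat.Partition k, ∏ j ∈ Finset.Icc 2 k, f j (p.parts.count j)
      ≤ ∏ j ∈ Finset.Icc 2 k, ∑ m ∈ Finset.range (k+1), f j m := by
    rw [Finset.prod_sum]
    set G : (∀ j ∈ Finset.Icc 2 k, ℕ) → ℝ :=
      fun v => ∏ j ∈ (Finset.Icc 2 k).attach, f j.1 (v j.1 j.2) with hG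
    have key : ∑ p : Nat.Partition k, ∏ j ∈ Finset.Icc 2 k, f j (p.parts.count j)
        = ∑ v ∈ Finset.univ.image F, G v := by
      rw [Finset.sum_image (fun p _ q _ h => hFinj p q h)]
      refine Finset.sum_congr rfl fun p _ => ?_
      rw [hG]
      rw [← Finset.prod_attach (Finset.Icc 2 k) (fun j => f j (p.parts.count j))]
    rw [key]
    refine Finset.sum_le_sum_of_subset_of_nonneg ?_ (fun v _ _ => ?_)
    · intro v hv
      rw [Finset.mem_image] at hv
      obtain ⟨p, _, rfl⟩ := hv
      exact hFmem p
    · exact Finset.prod_nonneg fun j _ => hfnn _ _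
  -- step 2: bound partial exp sums by exp
  have step2 : ∏ j ∈ Finset.Icc 2 k, ∑ m ∈ Finset.range (k+1), f j m
      ≤ Real.exp (∑ j ∈ Finset.Icc 2 k, x j) := by
    rw [Real.exp_sum]
    refine Finset.prod_le_prod (fun j _ => Finset.sum_nonneg fun m _ => hfnn j m) ?_
    intro j _
    exact Real.sum_le_exp_of_nonneg (hxnn j) (k+1)
  -- step 3: bound the sum of x
  have step3 : ∑ j ∈ Finset.Icc 2 k, x j ≤ a + a ^ 2 / ((k:ℝ) - a) := by
    have hka : (0:ℝ) < (k:ℝ) - a := by linarith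
    have hrw : ∑ j ∈ Finset.Icc 2 k, x j
        = a * ∑ i ∈ Finset.range (k-1), (a / k)^i := by
      rw [Finset.mul_sum]
      rw [show Finset.Icc 2 k = Finset.Ico 2 (k+1) by rfl, Finset.sum_Ico_eq_sum_range]
      refine Finset.sum_congr rfl fun i _ => ?_
      show a ^ (2 + i - 1) * ((k:ℝ) ^ (2 + i - 2))⁻¹ = a * (a / ↑k) ^ i
      rw [div_pow]
      have h1 : 2 + i - 1 = i + 1 := by omega
      have h2 : 2 + i - 2 = i := by omega
      rw [h1, h2, pow_succ]
      field_simp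
    rw [hrw]
    have hr1 : a / k < 1 := (div_lt_one hk0).2 hak
    have hr0 : 0 ≤ a / k := by positivity
    have hgeom : ∑ i ∈ Finset.range (k-1), (a / k)^i ≤ 1 / (1 - a/k) := by
      rw [le_div_iff₀ (by linarith)]
      have := geom_sum_mul (a/k) (k-1)
      have h1 : (∑ i ∈ Finset.range (k-1), (a / k)^i) * (1 - a/k)
          = 1 - (a/k)^(k-1) := by
        have := geom_sum_mul (a/k) (k-1)
        nlinarith [this]
      rw [h1]
      have : 0 ≤ (a/k)^(k-1) := by positivity
      linarith
    have : a * ∑ i ∈ Finset.range (k-1), (a / k)^i ≤ a * (1 / (1 - a/k)) :=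
      mul_le_mul_of_nonneg_left hgeom ha.le
    refine this.trans (le_of_eq ?_)
    field_simp
    ring
  -- combining
  calc ∑ p : Nat.Partition k, ∏ j ∈ Finset.Icc 2 k,
        (a ^ ((j - 1) * p.parts.count j) *
            (k : ℝ) ^ (-(((j : ℤ) - 2) * (p.parts.count j : ℤ))) /
          (Nat.factorial (p.parts.count j) : ℝ))
      = ∑ p : Nat.Partition k, ∏ j ∈ Finset.Icc 2 k, f j (p.parts.count j) := by
        refine Finset.sum_congr rfl fun p _ => Finset.prod_congr rfl fun j hj => ?_
        exact hterm j hj _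
    _ ≤ ∏ j ∈ Finset.Icc 2 k, ∑ m ∈ Finset.range (k+1), f j m := step1
    _ ≤ Real.exp (∑ j ∈ Finset.Icc 2 k, x j) := step2
    _ ≤ Real.exp (a + a ^ 2 / ((k:ℝ) - a)) := Real.exp_le_exp.2 step3
end

section
/- One-parameter chaining bound for the temporal modulus of continuity: let (Ω, F, P) be a probability space and (Y(α))_{α ∈ [1,2]} a real-valued stochastic process with almost surely continuous sample paths. Fix κ ∈ (0,1), c > 0 and s₀ > 0, and assume that for all 1 ≤ α₂ < α₁ ≤ 2 and all s ≥ s₀: P( Y(α₁) − Y(α₂) ≥ s (α₁ − α₂)^{κ} ) ≤ exp(−c s^{3/2}) and P( Y(α₁) − Y(α₂) ≤ −s (α₁ − α₂)^{κ} ) ≤ exp(−c s²). Then there exist c′ > 0 and s₁ > 0, depending only on κ, c and s₀, such that for all s ≥ s₁: P( sup_{τ ∈ (0,1]} ( Y(1+τ) − Y(1) ) / ( τ^{κ} (log(2/τ))^{2/3} ) ≥ s ) ≤ exp(−c′ s^{3/2}) and P( inf_{τ ∈ (0,1]} ( Y(1+τ) − Y(1) ) / ( τ^{κ} (log(2/τ))^{1/2}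 ) ≤ −s ) ≤ exp(−c′ s²). -/
/-!
Chaining over the dyadic grid of `[1, 2]`. At level `m` there are `2 ^ m` increments of mesh
`2 ^ (-m)`; each is allowed to reach `A s (m + 1) ^ q 2 ^ (-κ m)`, with `q p = 1`, so that the
two-point tail bound makes a single violation cost `exp (-c (A s) ^ p (m + 1))`. The factor
`m + 1` in the exponent beats the `2 ^ m` events of level `m` once `s` is large, and the union
bound over all levels is `exp (-c' s ^ p)`. Off this union, `1 + τ` with `τ` dyadic is reached from
`1` by at most one increment per level `m ≥ m₀`, where `2 ^ (-m₀) ≈ τ`. The geometric decay in `m`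
bounds the chain by a constant times its first term, and `2 ^ (-κ m₀) ≤ τ ^ κ`,
`m₀ + 1 ≲ log (2 / τ)`. Continuity extends the bound to all of `(0, 1]`. The lower tail is the
upper tail of `-Y`.
-/

open MeasureTheory Set
open scoped ENNReal

noncomputable section

lemma apply_zero_eq_of_apply_two_mul {g : ℕ → ℕ → ℝ}
    (hrefine : ∀ n k, g (n + 1) (2 * k) = g n k) (n : ℕ) : g n 0 = g 0 0 := by
  induction n with
  | zero => rfl
  | succ n ih => simpa using (hrefine n 0).trans ih

/-- Read `g n j` as the value at the dyadic point `j / 2 ^ n`. The point is reached from `0` by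
one increment at each level `m₀, …, n`, where `2 ^ (-m₀)` is comparable to `j / 2 ^ n`. -/
lemma exists_dyadic_chain {g : ℕ → ℕ → ℝ} (hrefine : ∀ n k, g (n + 1) (2 * k) = g n k)
    {b : ℕ → ℝ} (hb : ∀ m, 0 ≤ b m)
    (hinc : ∀ m j, j < 2 ^ m → g m (j + 1) - g m j ≤ b m) :
    ∀ n j, 1 ≤ j → j ≤ 2 ^ n → ∃ m₀ ≤ n, 2 ^ n ≤ j * 2 ^ m₀ ∧ (j + 1) * 2 ^ m₀ ≤ 2 ^ (n + 1) ∧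
      g n j - g 0 0 ≤ ∑ m ∈ Finset.Icc m₀ n, b m := by
  intro n
  induction n with
  | zero =>
    intro j hj1 hj2
    obtain rfl : j = 1 := by omega
    exact ⟨0, le_rfl, by norm_num, by norm_num, by simpa using hinc 0 0 one_pos⟩
  | succ n ih =>
    intro j hj1 hj2
    have h2n := pow_succ 2 n
    have h2n' := pow_succ 2 (n + 1)
    obtain ⟨k, rfl | rfl⟩ := Nat.even_or_odd' j
    · obtain ⟨m₀, hm₀, hlo, hhi, hchain⟩ := ih k (by omega) (by omega)
      refine ⟨m₀, hm₀.trans n.le_succ, by nlinarith, by nlinarith, ?_⟩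
      rw [hrefine]
      exact hchain.trans (Finset.sum_le_sum_of_subset_of_nonneg
        (Finset.Icc_subset_Icc_right n.le_succ) fun m _ _ => hb m)
    · rcases Nat.eq_zero_or_pos k with rfl | hk
      · refine ⟨n + 1, le_rfl, by omega, by omega, ?_⟩
        simpa [apply_zero_eq_of_apply_two_mul hrefine] using hinc (n + 1) 0 (by positivity)
      · obtain ⟨m₀, hm₀, hlo, hhi, hchain⟩ := ih k hk (by omega)
        refine ⟨m₀, hm₀.trans n.le_succ, by nlinarith, by nlinarith, ?_⟩
        rw [Finset.sum_Icc_succ_top (by omega)]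
        have hstep := hinc (n + 1) (2 * k) (by omega)
        rw [hrefine] at hstep
        linarith

lemma summable_add_one_mul_geometric {r : ℝ} (hr0 : 0 ≤ r) (hr1 : r < 1) :
    Summable fun k : ℕ => ((k : ℝ) + 1) * r ^ k := by
  have hr : ‖r‖ < 1 := by rwa [Real.norm_of_nonneg hr0]
  simpa [add_mul] using
    (summable_pow_mul_geometric_of_norm_lt_one 1 hr).add (summable_geometric_of_lt_one hr0 hr1)

lemma sum_Icc_add_one_rpow_mul_pow_le {q r : ℝ} (hq0 : 0 ≤ q) (hq1 : q ≤ 1) (hr0 : 0 ≤ r)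
    (hr1 : r < 1) (m₀ n : ℕ) :
    ∑ m ∈ Finset.Icc m₀ n, ((m : ℝ) + 1) ^ q * r ^ m ≤
      ((m₀ : ℝ) + 1) ^ q * r ^ m₀ * ∑' k : ℕ, ((k : ℝ) + 1) * r ^ k := by
  rw [← Finset.Ico_add_one_right_eq_Icc, Finset.sum_Ico_eq_sum_range]
  have hterm (k : ℕ) : (((m₀ + k : ℕ) : ℝ) + 1) ^ q * r ^ (m₀ + k) ≤
      ((m₀ : ℝ) + 1) ^ q * r ^ m₀ * (((k : ℝ) + 1) * r ^ k) := by
    have hsplit : (((m₀ + k : ℕ) : ℝ) + 1) ^ q ≤ ((m₀ : ℝ) + 1) ^ q * ((k : ℝ) + 1) :=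
      calc (((m₀ + k : ℕ) : ℝ) + 1) ^ q ≤ (((m₀ : ℝ) + 1) * ((k : ℝ) + 1)) ^ q := by
            gcongr; push_cast; nlinarith [m₀.cast_nonneg (α := ℝ), k.cast_nonneg (α := ℝ)]
        _ = ((m₀ : ℝ) + 1) ^ q * ((k : ℝ) + 1) ^ q := Real.mul_rpow (by positivity) (by positivity)
        _ ≤ ((m₀ : ℝ) + 1) ^ q * ((k : ℝ) + 1) := by
            gcongr; exact Real.rpow_le_self_of_one_le (by simp) hq1
    calc (((m₀ + k : ℕ) : ℝ) + 1) ^ q * r ^ (m₀ + k)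
        ≤ ((m₀ : ℝ) + 1) ^ q * ((k : ℝ) + 1) * r ^ (m₀ + k) := by gcongr
      _ = _ := by ring
  calc _ ≤ ∑ k ∈ Finset.range (n + 1 - m₀),
          ((m₀ : ℝ) + 1) ^ q * r ^ m₀ * (((k : ℝ) + 1) * r ^ k) :=
        Finset.sum_le_sum fun k _ => hterm k
    _ ≤ _ := by
      rw [← Finset.mul_sum]
      gcongr
      exact (summable_add_one_mul_geometric hr0 hr1).sum_le_tsum _ fun k _ => by positivity

lemma two_rpow_neg_lt_one {κ : ℝ} (hκ : 0 < κ) : (2 : ℝ) ^ (-κ) < 1 :=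
  Real.rpow_lt_one_of_one_lt_of_neg one_lt_two (neg_neg_of_pos hκ)

lemma two_rpow_neg_pow (κ : ℝ) (m : ℕ) : ((2 : ℝ) ^ (-κ)) ^ m = ((2 ^ m)⁻¹) ^ κ := by
  rw [Real.rpow_pow_comm zero_le_two, Real.rpow_neg (by positivity), Real.inv_rpow (by positivity)]

lemma add_one_rpow_mul_two_rpow_neg_pow_le {κ q τ : ℝ} (hκ : 0 ≤ κ) (hq : 0 ≤ q)
    (hτ : τ ∈ Ioc 0 1) {m : ℕ} (hlo : 1 ≤ τ * 2 ^ m) (hhi : τ * 2 ^ m ≤ 2) :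
    ((m : ℝ) + 1) ^ q * (2 ^ (-κ)) ^ m ≤
      (2 / Real.log 2) ^ q * (τ ^ κ * Real.log (2 / τ) ^ q) := by
  obtain ⟨hτ0, hτ1⟩ := hτ
  have hlog2 : 0 < Real.log 2 := Real.log_pos one_lt_two
  have hmesh : ((2 : ℝ) ^ (-κ)) ^ m ≤ τ ^ κ := by
    rw [two_rpow_neg_pow]
    gcongr
    rw [inv_le_iff_one_le_mul₀ (by positivity)]
    linarith [mul_comm τ (2 ^ m)]
  have hlog : Real.log 2 ≤ Real.log (2 / τ) :=
    Real.log_le_log two_pos (by rw [le_div_iff₀ hτ0]; nlinarith)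
  have hlevel : ((m : ℝ) + 1) * Real.log 2 ≤ 2 * Real.log (2 / τ) := by
    have hm : (m : ℝ) * Real.log 2 ≤ Real.log (2 / τ) := by
      rw [← Real.log_pow]
      exact Real.log_le_log (by positivity) (by rw [le_div_iff₀ hτ0]; linarith)
    linarith
  have hdepth : ((m : ℝ) + 1) ^ q ≤ (2 / Real.log 2) ^ q * Real.log (2 / τ) ^ q := by
    rw [← Real.mul_rpow (by positivity) (by linarith)]
    gcongr
    rw [div_mul_eq_mul_div, le_div_iff₀ hlog2]
    linarith
  calc ((m : ℝ) + 1) ^ q * (2 ^ (-κ)) ^ m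
      ≤ (2 / Real.log 2) ^ q * Real.log (2 / τ) ^ q * τ ^ κ :=
        mul_le_mul hdepth hmesh (by positivity)
          (mul_nonneg (by positivity) (Real.rpow_nonneg (by linarith) _))
    _ = _ := by ring

lemma rpow_mul_log_two_div_rpow_pos {κ q τ : ℝ} (hτ : τ ∈ Ioc 0 1) :
    0 < τ ^ κ * Real.log (2 / τ) ^ q := by
  have hlog : 0 < Real.log (2 / τ) :=
    Real.log_pos (by rw [lt_div_iff₀ hτ.1]; linarith [hτ.2])
  exact mul_pos (Real.rpow_pos_of_pos hτ.1 _) (Real.rpow_pos_of_pos hlog _)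

lemma continuousOn_rpow_mul_log_rpow {κ q : ℝ} (hκ : 0 ≤ κ) (hq : 0 ≤ q) :
    ContinuousOn (fun τ : ℝ => τ ^ κ * Real.log (2 / τ) ^ q) (Ioc 0 1) :=
  (continuousOn_id.rpow_const fun _ _ => Or.inr hκ).mul
    (((continuousOn_const.div continuousOn_id fun _ hτ => hτ.1.ne').log
      fun _ hτ => div_ne_zero two_ne_zero hτ.1.ne').rpow_const fun _ _ => Or.inr hq)

lemma le_of_forall_dyadic_le {F : ℝ → ℝ} (hF : ContinuousOn F (Ioc 0 1)) {M : ℝ}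
    (hdyadic : ∀ n j : ℕ, 1 ≤ j → j ≤ 2 ^ n → F (j / 2 ^ n) ≤ M) {τ : ℝ} (hτ : τ ∈ Ioc 0 1) :
    F τ ≤ M := by
  obtain ⟨hτ0, hτ1⟩ := hτ
  set d : ℕ → ℝ := fun n => (⌈τ * 2 ^ n⌉₊ : ℝ) / 2 ^ n
  have hceil_pos (n : ℕ) : 1 ≤ ⌈τ * 2 ^ n⌉₊ := Nat.one_le_iff_ne_zero.2 <| by
    simpa [Nat.ceil_eq_zero, not_le] using by positivity
  have hceil_le (n : ℕ) : ⌈τ * 2 ^ n⌉₊ ≤ 2 ^ n :=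
    Nat.ceil_le.2 (by push_cast; nlinarith [pow_pos (two_pos : (0 : ℝ) < 2) n])
  have hd_ge (n : ℕ) : τ ≤ d n := by
    rw [le_div_iff₀ (by positivity)]; exact Nat.le_ceil _
  have hd_le (n : ℕ) : d n ≤ τ + (2⁻¹) ^ n := by
    rw [div_le_iff₀ (by positivity), add_mul, inv_pow, inv_mul_cancel₀ (by positivity)]
    exact (Nat.ceil_lt_add_one (by positivity)).le
  have hd_mem (n : ℕ) : d n ∈ Ioc 0 1 :=
    ⟨hτ0.trans_le (hd_ge n), by rw [div_le_one (by positivity)]; exact_mod_cast hceil_le n⟩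
  have hd : Filter.Tendsto d Filter.atTop (nhds τ) := by
    refine tendsto_of_tendsto_of_tendsto_of_le_of_le tendsto_const_nhds ?_ hd_ge hd_le
    simpa using tendsto_const_nhds.add
      (tendsto_pow_atTop_nhds_zero_of_lt_one (by norm_num : (0 : ℝ) ≤ 2⁻¹) (by norm_num))
  exact le_of_tendsto ((hF τ ⟨hτ0, hτ1⟩).tendsto.comp
    (tendsto_nhdsWithin_iff.2 ⟨hd, Filter.Eventually.of_forall hd_mem⟩))
    (Filter.Eventually.of_forall fun n => hdyadic n _ (hceil_pos n) (hceil_le n))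

def chainingConstant (κ q : ℝ) : ℝ :=
  (∑' k : ℕ, ((k : ℝ) + 1) * ((2 : ℝ) ^ (-κ)) ^ k) * (2 / Real.log 2) ^ q

lemma chainingConstant_pos {κ : ℝ} (hκ : 0 < κ) (q : ℝ) : 0 < chainingConstant κ q := by
  have hsum := summable_add_one_mul_geometric (by positivity) (two_rpow_neg_lt_one hκ)
  have hlog2 : 0 < Real.log 2 := Real.log_pos one_lt_two
  refine mul_pos (lt_of_lt_of_le one_pos ?_) (by positivity)
  simpa using hsum.le_tsum 0 fun k _ => by positivity

theorem sub_le_of_dyadic_increments_le {f : ℝ → ℝ} (hf : ContinuousOn f (Icc 0 1))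
    {κ q a : ℝ} (hκ : 0 < κ) (hq0 : 0 ≤ q) (hq1 : q ≤ 1) (ha : 0 ≤ a)
    (hinc : ∀ m j : ℕ, j < 2 ^ m → f (((j : ℝ) + 1) / 2 ^ m) - f (j / 2 ^ m) ≤
      a * (((m : ℝ) + 1) ^ q * ((2 : ℝ) ^ (-κ)) ^ m))
    {τ : ℝ} (hτ : τ ∈ Ioc 0 1) :
    f τ - f 0 ≤ a * chainingConstant κ q * (τ ^ κ * Real.log (2 / τ) ^ q) := by
  have hr0 : (0 : ℝ) ≤ 2 ^ (-κ) := by positivity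
  have hF : ContinuousOn
      (fun τ => f τ - f 0 - a * chainingConstant κ q * (τ ^ κ * Real.log (2 / τ) ^ q))
      (Ioc 0 1) :=
    ((hf.mono Ioc_subset_Icc_self).sub continuousOn_const).sub
      (continuousOn_const.mul (continuousOn_rpow_mul_log_rpow hκ.le hq0))
  refine sub_nonpos.1 (le_of_forall_dyadic_le hF (fun n j hj1 hj2 => ?_) hτ)
  obtain ⟨m₀, -, hlo, hhi, hchain⟩ := exists_dyadic_chain (g := fun n j => f (j / 2 ^ n))
    (b := fun m => a * (((m : ℝ) + 1) ^ q * ((2 : ℝ) ^ (-κ)) ^ m))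
    (fun n k => by congr 1; push_cast; field_simp; ring)
    (fun m => mul_nonneg ha (mul_nonneg (by positivity) (pow_nonneg hr0 m)))
    (fun m j hj => by push_cast; exact hinc m j hj) n j hj1 hj2
  have hτ' : (j : ℝ) / 2 ^ n ∈ Ioc 0 1 :=
    ⟨by have : (0 : ℝ) < j := by exact_mod_cast hj1
        positivity,
     by rw [div_le_one (by positivity)]; exact_mod_cast hj2⟩
  have hlo' : 1 ≤ (j : ℝ) / 2 ^ n * 2 ^ m₀ := by
    rw [div_mul_eq_mul_div, le_div_iff₀ (by positivity)]; exact_mod_cast by simpa using hlo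
  have hhi' : (j : ℝ) / 2 ^ n * 2 ^ m₀ ≤ 2 := by
    rw [div_mul_eq_mul_div, div_le_iff₀ (by positivity)]
    have : ((j : ℝ) + 1) * 2 ^ m₀ ≤ 2 ^ n * 2 := by exact_mod_cast (pow_succ 2 n) ▸ hhi
    nlinarith [pow_pos (two_pos : (0 : ℝ) < 2) m₀]
  rw [sub_nonpos]
  calc f (j / 2 ^ n) - f 0 ≤ ∑ m ∈ Finset.Icc m₀ n, a * (((m : ℝ) + 1) ^ q * (2 ^ (-κ)) ^ m) := by
        simpa using hchain
    _ ≤ a * (((m₀ : ℝ) + 1) ^ q * (2 ^ (-κ)) ^ m₀ *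
          ∑' k : ℕ, ((k : ℝ) + 1) * ((2 : ℝ) ^ (-κ)) ^ k) := by
        rw [← Finset.mul_sum]
        gcongr
        exact sum_Icc_add_one_rpow_mul_pow_le hq0 hq1 hr0 (two_rpow_neg_lt_one hκ) m₀ n
    _ ≤ a * ((2 / Real.log 2) ^ q * (((j : ℝ) / 2 ^ n) ^ κ * Real.log (2 / (j / 2 ^ n)) ^ q) *
          ∑' k : ℕ, ((k : ℝ) + 1) * ((2 : ℝ) ^ (-κ)) ^ k) := by
        refine mul_le_mul_of_nonneg_left (mul_le_mul_of_nonneg_right ?_ ?_) ha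
        · exact add_one_rpow_mul_two_rpow_neg_pow_le hκ.le hq0 hτ' hlo' hhi'
        · exact tsum_nonneg fun k => by positivity
    _ = _ := by unfold chainingConstant; ring

lemma measure_iUnion_dyadic_le {Ω : Type*} [MeasurableSpace Ω] (μ : Measure Ω)
    (E : ℕ → ℕ → Set Ω) (b : ℕ → ℝ≥0∞) (hE : ∀ m j, j < 2 ^ m → μ (E m j) ≤ b m) :
    μ (⋃ m, ⋃ j ∈ Finset.range (2 ^ m), E m j) ≤ ∑' m, 2 ^ m * b m := by
  refine (measure_iUnion_le _).trans (ENNReal.tsum_le_tsum fun m => ?_)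
  calc μ (⋃ j ∈ Finset.range (2 ^ m), E m j) ≤ ∑ j ∈ Finset.range (2 ^ m), μ (E m j) :=
        measure_biUnion_finset_le _ _
    _ ≤ ∑ j ∈ Finset.range (2 ^ m), b m :=
        Finset.sum_le_sum fun j hj => hE m j (Finset.mem_range.1 hj)
    _ = 2 ^ m * b m := by simp

lemma tsum_two_pow_mul_exp_le {B : ℝ} (hB : 2 * Real.log 2 ≤ B) :
    ∑' m : ℕ, 2 ^ m * ENNReal.ofReal (Real.exp (-B * (m + 1))) ≤
      ENNReal.ofReal (Real.exp (-B / 2)) := by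
  have hterm (m : ℕ) : 2 ^ m * ENNReal.ofReal (Real.exp (-B * (m + 1))) ≤
      ENNReal.ofReal (Real.exp (-B / 2)) * 2⁻¹ ^ (m + 1) := by
    have hreal : (2 : ℝ) ^ m * Real.exp (-B * (m + 1)) ≤ Real.exp (-B / 2) * 2⁻¹ ^ (m + 1) := by
      have hpow (n : ℕ) : (2 : ℝ) ^ n = Real.exp (n * Real.log 2) := by
        rw [Real.exp_nat_mul, Real.exp_log two_pos]
      rw [hpow, inv_pow, hpow, ← Real.exp_neg, ← Real.exp_add, ← Real.exp_add, Real.exp_le_exp]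
      push_cast
      nlinarith [m.cast_nonneg (α := ℝ)]
    calc 2 ^ m * ENNReal.ofReal (Real.exp (-B * (m + 1)))
        = ENNReal.ofReal (2 ^ m * Real.exp (-B * (m + 1))) := by
          rw [ENNReal.ofReal_mul (by positivity), ENNReal.ofReal_pow zero_le_two,
            ENNReal.ofReal_ofNat]
      _ ≤ ENNReal.ofReal (Real.exp (-B / 2) * 2⁻¹ ^ (m + 1)) := ENNReal.ofReal_le_ofReal hreal
      _ = _ := by
          rw [ENNReal.ofReal_mul (Real.exp_nonneg _), ENNReal.ofReal_pow (by norm_num),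
            ENNReal.ofReal_inv_of_pos two_pos, ENNReal.ofReal_ofNat]
  calc _ ≤ ∑' m : ℕ, ENNReal.ofReal (Real.exp (-B / 2)) * 2⁻¹ ^ (m + 1) :=
        ENNReal.tsum_le_tsum hterm
    _ = ENNReal.ofReal (Real.exp (-B / 2)) := by
      rw [ENNReal.tsum_mul_left, ENNReal.tsum_geometric_add_one, ENNReal.one_sub_inv_two,
        inv_inv, ENNReal.inv_mul_cancel two_ne_zero ENNReal.ofNat_ne_top, mul_one]

lemma sSup_image_div_le_of_dyadic_increments_le {f : ℝ → ℝ} (hf : ContinuousOn f (Icc 0 1))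
    {κ q a : ℝ} (hκ : 0 < κ) (hq0 : 0 ≤ q) (hq1 : q ≤ 1) (ha : 0 ≤ a)
    (hinc : ∀ m j : ℕ, j < 2 ^ m → f (((j : ℝ) + 1) / 2 ^ m) - f (j / 2 ^ m) ≤
      a * (((m : ℝ) + 1) ^ q * ((2 : ℝ) ^ (-κ)) ^ m)) :
    sSup ((fun τ => (f τ - f 0) / (τ ^ κ * Real.log (2 / τ) ^ q)) '' Ioc 0 1) ≤
      a * chainingConstant κ q := by
  refine Real.sSup_le ?_ (mul_nonneg ha (chainingConstant_pos hκ q).le)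
  rintro _ ⟨τ, hτ, rfl⟩
  rw [div_le_iff₀ (rpow_mul_log_two_div_rpow_pos hτ)]
  exact sub_le_of_dyadic_increments_le hf hκ hq0 hq1 ha hinc hτ

lemma measure_dyadic_increment_ge_le {Ω : Type*} [MeasurableSpace Ω] {μ : Measure Ω}
    {Z : Ω → ℝ → ℝ} {κ c s₀ p q : ℝ} (hq0 : 0 < q) (hqp : q * p = 1)
    (hinc : ∀ α₁ α₂ : ℝ, 1 ≤ α₂ → α₂ < α₁ → α₁ ≤ 2 → ∀ s : ℝ, s₀ ≤ s →
      μ {ω | s * (α₁ - α₂) ^ κ ≤ Z ω α₁ - Z ω α₂} ≤ ENNReal.ofReal (Real.exp (-c * s ^ p)))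
    {a : ℝ} (ha : s₀ ≤ a) (ha0 : 0 ≤ a) {m j : ℕ} (hj : j < 2 ^ m) :
    μ {ω | a * (((m : ℝ) + 1) ^ q * (2 ^ (-κ)) ^ m) ≤
        Z ω (1 + ((j : ℝ) + 1) / 2 ^ m) - Z ω (1 + j / 2 ^ m)} ≤
      ENNReal.ofReal (Real.exp (-(c * a ^ p) * (m + 1))) := by
  have hj' : (j : ℝ) + 1 ≤ 2 ^ m := by exact_mod_cast hj
  have hlevel : s₀ ≤ a * ((m : ℝ) + 1) ^ q :=
    ha.trans (le_mul_of_one_le_right ha0 (Real.one_le_rpow (by linarith) hq0.le))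
  have hpow : (a * ((m : ℝ) + 1) ^ q) ^ p = a ^ p * ((m : ℝ) + 1) := by
    rw [Real.mul_rpow ha0 (by positivity), ← Real.rpow_mul (by positivity), hqp, Real.rpow_one]
  have hmesh : (1 + ((j : ℝ) + 1) / 2 ^ m) - (1 + j / 2 ^ m) = (2 ^ m)⁻¹ := by
    field_simp; ring
  have h := hinc (1 + ((j : ℝ) + 1) / 2 ^ m) (1 + j / 2 ^ m)
    (le_add_of_nonneg_right (by positivity)) (by gcongr; linarith)
    (by linarith [(div_le_one (by positivity)).2 hj']) _ hlevel
  rw [hmesh, ← two_rpow_neg_pow, hpow] at h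
  convert h using 3
  · simp only [mul_assoc]
  · ring

theorem exists_eventually_measure_le_sSup_le {Ω : Type*} [MeasurableSpace Ω] (μ : Measure Ω)
    (Z : Ω → ℝ → ℝ) (hcont : ∀ᵐ ω ∂μ, ContinuousOn (Z ω) (Icc 1 2))
    {κ c s₀ p q : ℝ} (hκ : 0 < κ) (hc : 0 < c) (hq0 : 0 < q) (hq1 : q ≤ 1) (hqp : q * p = 1)
    (hinc : ∀ α₁ α₂ : ℝ, 1 ≤ α₂ → α₂ < α₁ → α₁ ≤ 2 → ∀ s : ℝ, s₀ ≤ s →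
      μ {ω | s * (α₁ - α₂) ^ κ ≤ Z ω α₁ - Z ω α₂} ≤ ENNReal.ofReal (Real.exp (-c * s ^ p))) :
    ∃ c' : ℝ, 0 < c' ∧ ∀ᶠ s in Filter.atTop,
      μ {ω | s ≤ sSup ((fun τ : ℝ =>
        (Z ω (1 + τ) - Z ω 1) / (τ ^ κ * Real.log (2 / τ) ^ q)) '' Ioc 0 1)} ≤
        ENNReal.ofReal (Real.exp (-c' * s ^ p)) := by
  have hp : 0 < p := pos_of_mul_pos_right (hqp ▸ one_pos) hq0.le
  have hK := chainingConstant_pos hκ q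
  -- `A` is chosen so that off the bad events below the modulus is at most `s / 2`.
  set A := (2 * chainingConstant κ q)⁻¹
  have hA : 0 < A := by positivity
  refine ⟨c * A ^ p / 2, by positivity, ?_⟩
  have hlarge : ∀ᶠ s in Filter.atTop, 0 < s ∧ s₀ ≤ A * s ∧ 2 * Real.log 2 ≤ c * (A * s) ^ p :=
    (Filter.eventually_gt_atTop 0).and
      (((Filter.tendsto_id.const_mul_atTop hA).eventually_ge_atTop s₀).and
        ((((tendsto_rpow_atTop hp).comp (Filter.tendsto_id.const_mul_atTop hA)).const_mul_atTop
          hc).eventually_ge_atTop _))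
  filter_upwards [hlarge] with s ⟨hs, hsA, hB⟩
  set bad : ℕ → ℕ → Set Ω := fun m j => {ω | A * s * (((m : ℝ) + 1) ^ q * (2 ^ (-κ)) ^ m) ≤
    Z ω (1 + ((j : ℝ) + 1) / 2 ^ m) - Z ω (1 + j / 2 ^ m)}
  have hsub : {ω | s ≤ sSup ((fun τ : ℝ =>
      (Z ω (1 + τ) - Z ω 1) / (τ ^ κ * Real.log (2 / τ) ^ q)) '' Ioc 0 1)} ⊆
      (⋃ m, ⋃ j ∈ Finset.range (2 ^ m), bad m j) ∪ {ω | ¬ContinuousOn (Z ω) (Icc 1 2)} := by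
    intro ω hω
    by_contra hnot
    simp only [mem_union, mem_iUnion, mem_ofPred_eq, not_or, not_exists, not_not,
      Finset.mem_range, not_le, bad] at hnot
    obtain ⟨hgood, hcω⟩ := hnot
    have hmod := sSup_image_div_le_of_dyadic_increments_le (f := fun τ => Z ω (1 + τ))
      (hcω.comp (continuousOn_const.add continuousOn_id)
        fun τ hτ => ⟨by linarith [hτ.1], by linarith [hτ.2]⟩)
      hκ hq0.le hq1 (by positivity) (fun m j hj => (hgood m j hj).le)
    simp only [add_zero] at hmod
    have hhalf : A * s * chainingConstant κ q = s / 2 := by simp only [A]; field_simp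
    linarith [le_trans hω hmod]
  calc _ ≤ μ (⋃ m, ⋃ j ∈ Finset.range (2 ^ m), bad m j) +
        μ {ω | ¬ContinuousOn (Z ω) (Icc 1 2)} := (measure_mono hsub).trans (measure_union_le _ _)
    _ = μ (⋃ m, ⋃ j ∈ Finset.range (2 ^ m), bad m j) := by rw [ae_iff.1 hcont, add_zero]
    _ ≤ ∑' m : ℕ, 2 ^ m * ENNReal.ofReal (Real.exp (-(c * (A * s) ^ p) * (m + 1))) :=
        measure_iUnion_dyadic_le μ bad _ fun m j hj =>
          measure_dyadic_increment_ge_le hq0 hqp hinc hsA (by positivity) hj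
    _ ≤ ENNReal.ofReal (Real.exp (-(c * (A * s) ^ p) / 2)) := tsum_two_pow_mul_exp_le hB
    _ = _ := by rw [Real.mul_rpow hA.le hs.le]; ring_nf

lemma ofReal_exp_neg_mul_le_of_le {c c' x : ℝ} (hc : c' ≤ c) (hx : 0 ≤ x) :
    ENNReal.ofReal (Real.exp (-c * x)) ≤ ENNReal.ofReal (Real.exp (-c' * x)) :=
  ENNReal.ofReal_le_ofReal (Real.exp_le_exp.2 (by nlinarith))

lemma sInf_image_eq_neg_sSup_image_neg {α : Type*} (f : α → ℝ) (S : Set α) :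
    sInf (f '' S) = -sSup ((fun x => -f x) '' S) := by
  rw [Real.sInf_def, ← Set.image_neg_eq_neg, Set.image_image]

theorem temporal_modulus_chaining_general {Ω : Type*} [MeasurableSpace Ω] (P : Measure Ω)
    (Y : Ω → ℝ → ℝ)
    (hcont : ∀ᵐ ω ∂P, ContinuousOn (Y ω) (Set.Icc 1 2))
    (κ c s₀ : ℝ) (hκ : κ ∈ Set.Ioo (0 : ℝ) 1) (hc : 0 < c)
    (hup : ∀ α₁ α₂ : ℝ, 1 ≤ α₂ → α₂ < α₁ → α₁ ≤ 2 → ∀ s : ℝ, s₀ ≤ s →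
      P {ω | s * (α₁ - α₂) ^ κ ≤ Y ω α₁ - Y ω α₂} ≤
        ENNReal.ofReal (Real.exp (-c * s ^ ((3 : ℝ) / 2))))
    (hlow : ∀ α₁ α₂ : ℝ, 1 ≤ α₂ → α₂ < α₁ → α₁ ≤ 2 → ∀ s : ℝ, s₀ ≤ s →
      P {ω | Y ω α₁ - Y ω α₂ ≤ -(s * (α₁ - α₂) ^ κ)} ≤
        ENNReal.ofReal (Real.exp (-c * s ^ 2))) :
    ∃ c' : ℝ, 0 < c' ∧ ∃ s₁ : ℝ, 0 < s₁ ∧ ∀ s : ℝ, s₁ ≤ s →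
      (P {ω | s ≤ sSup ((fun τ : ℝ =>
            (Y ω (1 + τ) - Y ω 1) / (τ ^ κ * Real.log (2 / τ) ^ ((2 : ℝ) / 3))) ''
          Set.Ioc 0 1)} ≤ ENNReal.ofReal (Real.exp (-c' * s ^ ((3 : ℝ) / 2)))) ∧
      (P {ω | sInf ((fun τ : ℝ =>
            (Y ω (1 + τ) - Y ω 1) / (τ ^ κ * Real.log (2 / τ) ^ ((1 : ℝ) / 2))) ''
          Set.Ioc 0 1) ≤ -s} ≤ ENNReal.ofReal (Real.exp (-c' * s ^ 2))) := by
  obtain ⟨c₁, hc₁, hsup⟩ := exists_eventually_measure_le_sSup_le P Y hcont hκ.1 hc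
    (q := 2 / 3) (p := 3 / 2) (by norm_num) (by norm_num) (by norm_num) hup
  have hlow' : ∀ α₁ α₂ : ℝ, 1 ≤ α₂ → α₂ < α₁ → α₁ ≤ 2 → ∀ s : ℝ, s₀ ≤ s →
      P {ω | s * (α₁ - α₂) ^ κ ≤ -Y ω α₁ - -Y ω α₂} ≤
        ENNReal.ofReal (Real.exp (-c * s ^ (2 : ℝ))) := by
    intro α₁ α₂ h₁ h₂ h₃ s hs
    simpa only [neg_sub_neg, le_sub_comm, sub_le_iff_le_add, neg_add_eq_sub, Real.rpow_two]
      using hlow α₁ α₂ h₁ h₂ h₃ s hs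
  obtain ⟨c₂, hc₂, hinf⟩ := exists_eventually_measure_le_sSup_le P (fun ω α => -Y ω α)
    (hcont.mono fun _ h => h.neg) hκ.1 hc (q := 1 / 2) (p := 2) (by norm_num) (by norm_num)
    (by norm_num) hlow'
  obtain ⟨s₁, hs₁⟩ := Filter.eventually_atTop.1 (hsup.and hinf)
  refine ⟨min c₁ c₂, lt_min hc₁ hc₂, max s₁ 1, by positivity, fun s hs => ?_⟩
  obtain ⟨h₁, h₂⟩ := hs₁ s (le_of_max_le_left hs)
  have hs0 : 0 ≤ s := zero_le_one.trans (le_of_max_le_right hs)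
  refine ⟨h₁.trans (ofReal_exp_neg_mul_le_of_le (min_le_left _ _) (by positivity)), ?_⟩
  simp_rw [sInf_image_eq_neg_sSup_image_neg, neg_le_neg_iff, ← neg_div, neg_sub]
  simp_rw [neg_sub_neg, Real.rpow_two] at h₂
  exact h₂.trans (ofReal_exp_neg_mul_le_of_le (min_le_right _ _) (by positivity))

/-- One-parameter chaining bound for the temporal modulus of continuity.
Given a process `Y` on `[1,2]` with a.s. continuous paths whose two-point increments
satisfy `P(Y(α₁) − Y(α₂) ≥ s(α₁−α₂)^κ) ≤ e^{−cs^{3/2}}` and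
`P(Y(α₁) − Y(α₂) ≤ −s(α₁−α₂)^κ) ≤ e^{−cs²}` for `s ≥ s₀`, there are `c' > 0`, `s₁ > 0`
such that for all `s ≥ s₁`,
`P(sup_{τ∈(0,1]} (Y(1+τ)−Y(1))/(τ^κ (log(2/τ))^{2/3}) ≥ s) ≤ e^{−c's^{3/2}}` and
`P(inf_{τ∈(0,1]} (Y(1+τ)−Y(1))/(τ^κ (log(2/τ))^{1/2}) ≤ −s) ≤ e^{−c's²}`. -/
theorem temporal_modulus_chaining {Ω : Type*} [MeasurableSpace Ω] (P : Measure Ω)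
    [IsProbabilityMeasure P] (Y : Ω → ℝ → ℝ)
    (hmeas : Measurable (Function.uncurry Y))
    (hcont : ∀ᵐ ω ∂P, ContinuousOn (Y ω) (Set.Icc 1 2))
    (κ c s₀ : ℝ) (hκ : κ ∈ Set.Ioo (0 : ℝ) 1) (hc : 0 < c) (hs₀ : 0 < s₀)
    (hup : ∀ α₁ α₂ : ℝ, 1 ≤ α₂ → α₂ < α₁ → α₁ ≤ 2 → ∀ s : ℝ, s₀ ≤ s →
      P {ω | s * (α₁ - α₂) ^ κ ≤ Y ω α₁ - Y ω α₂} ≤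
        ENNReal.ofReal (Real.exp (-c * s ^ ((3 : ℝ) / 2))))
    (hlow : ∀ α₁ α₂ : ℝ, 1 ≤ α₂ → α₂ < α₁ → α₁ ≤ 2 → ∀ s : ℝ, s₀ ≤ s →
      P {ω | Y ω α₁ - Y ω α₂ ≤ -(s * (α₁ - α₂) ^ κ)} ≤
        ENNReal.ofReal (Real.exp (-c * s ^ 2))) :
    ∃ c' : ℝ, 0 < c' ∧ ∃ s₁ : ℝ, 0 < s₁ ∧ ∀ s : ℝ, s₁ ≤ s →
      (P {ω | s ≤ sSup ((fun τ : ℝ =>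
            (Y ω (1 + τ) - Y ω 1) / (τ ^ κ * Real.log (2 / τ) ^ ((2 : ℝ) / 3))) ''
          Set.Ioc 0 1)} ≤ ENNReal.ofReal (Real.exp (-c' * s ^ ((3 : ℝ) / 2)))) ∧
      (P {ω | sInf ((fun τ : ℝ =>
            (Y ω (1 + τ) - Y ω 1) / (τ ^ κ * Real.log (2 / τ) ^ ((1 : ℝ) / 2))) ''
          Set.Ioc 0 1) ≤ -s} ≤ ENNReal.ofReal (Real.exp (-c' * s ^ 2))) :=
  temporal_modulus_chaining_general P Y hcont κ c s₀ hκ hc hup hlow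
end
end

section
/- Let N₁ be a real number with N₁ ≥ e^{e^{10}} and define recursively N_{k+1} := N_k + 10 log log N_k for k ≥ 1. Then N_M → ∞ as M → ∞, and liminf_{M → ∞} ( Σ_{k=1}^{M} 1/(N_k log N_k) ) / ( log log log N_M ) ≥ 1/10. -/
/-!
Write `f = log ∘ log ∘ log`, so `f' x = 1 / (x log x log log x)` decreases on `(e, ∞)`.
The step `N_k ↦ N_k + 10 log log N_k` therefore raises `f` by at most `10 / (N_k log N_k)`,
and, since `N_{k+1} ≤ 2 N_k`, by at least `5/4` of `1 / (N_k log N_k)`. Telescoping the first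
bound gives `Σ_{k ≤ M} 1 / (N_k log N_k) ≥ (f N_M - f N_1) / 10`, whence the liminf bound;
the second keeps the ratio bounded, without which its `liminf` in `ℝ` would be the junk
value `0`.
-/

open Filter Finset Real Topology

lemma log_sub_log_le_div {a b : ℝ} (ha : 0 < a) (hb : 0 < b) :
    log a - log b ≤ (a - b) / b := by
  have h := log_le_sub_one_of_pos (div_pos ha hb)
  rwa [log_div ha.ne' hb.ne', div_sub_one hb.ne'] at h

lemma div_le_log_sub_log {a b : ℝ} (ha : 0 < a) (hb : 0 < b) :
    (a - b) / a ≤ log a - log b := by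
  have h := one_sub_inv_le_log_of_pos (div_pos ha hb)
  rwa [log_div ha.ne' hb.ne', inv_div, one_sub_div ha.ne'] at h

lemma le_log_log_of_exp_exp_le {a x : ℝ} (hx : exp (exp a) ≤ x) : a ≤ log (log x) := by
  have hlx : exp a ≤ log x := (le_log_iff_exp_le ((exp_pos _).trans_le hx)).2 hx
  exact (le_log_iff_exp_le ((exp_pos a).trans_le hlx)).2 hlx

lemma log_log_log_le_log_log_log {x y : ℝ} (hx : exp 1 < x) (hxy : x ≤ y) :
    log (log (log x)) ≤ log (log (log y)) := by
  have hx0 : 0 < x := (exp_pos 1).trans hx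
  have hlx : 1 < log x := (lt_log_iff_exp_lt hx0).2 hx
  exact log_le_log (log_pos hlx) (log_le_log (by linarith) (log_le_log hx0 hxy))

lemma log_log_log_sub_le {x y : ℝ} (hx : exp 1 < x) (hxy : x ≤ y) :
    log (log (log y)) - log (log (log x)) ≤ (y - x) / (x * log x * log (log x)) := by
  have hx0 : 0 < x := (exp_pos 1).trans hx
  have hlx : 1 < log x := (lt_log_iff_exp_lt hx0).2 hx
  have hllx : 0 < log (log x) := log_pos hlx
  have hly : log x ≤ log y := log_le_log hx0 hxy
  have hlly : log (log x) ≤ log (log y) := log_le_log (by linarith) hly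
  calc log (log (log y)) - log (log (log x))
      ≤ (log (log y) - log (log x)) / log (log x) := log_sub_log_le_div (hllx.trans_le hlly) hllx
    _ ≤ (log y - log x) / log x / log (log x) := by
        gcongr; exact log_sub_log_le_div (by linarith) (by linarith)
    _ ≤ (y - x) / x / log x / log (log x) := by
        gcongr; exact log_sub_log_le_div (by linarith) hx0
    _ = (y - x) / (x * log x * log (log x)) := by ring

lemma div_le_log_log_log_sub {x y : ℝ} (hx : exp 1 < x) (hxy : x ≤ y) :
    (y - x) / (y * log y * log (log y)) ≤ log (log (log y)) - log (log (log x)) := by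
  have hx0 : 0 < x := (exp_pos 1).trans hx
  have hlx : 1 < log x := (lt_log_iff_exp_lt hx0).2 hx
  have hllx : 0 < log (log x) := log_pos hlx
  have hly : log x ≤ log y := log_le_log hx0 hxy
  have hlly : log (log x) ≤ log (log y) := log_le_log (by linarith) hly
  calc (y - x) / (y * log y * log (log y)) = (y - x) / y / log y / log (log y) := by ring
    _ ≤ (log y - log x) / log y / log (log y) := by
        gcongr
        · linarith
        · linarith
        · exact div_le_log_sub_log (by linarith) hx0
    _ ≤ (log (log y) - log (log x)) / log (log y) := by
        gcongr
        · linarith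
        · exact div_le_log_sub_log (by linarith) (by linarith)
    _ ≤ log (log (log y)) - log (log (log x)) := div_le_log_sub_log (hllx.trans_le hlly) hllx

lemma log_le_two_mul_log {x y : ℝ} (hx : 2 ≤ x) (hy : 0 < y) (hyx : y ≤ 2 * x) :
    log y ≤ 2 * log x := by
  calc log y ≤ log (2 * x) := log_le_log hy hyx
    _ = log 2 + log x := log_mul two_ne_zero (by positivity)
    _ ≤ 2 * log x := by linarith [log_le_log two_pos hx]

lemma log_log_le_two_mul_log_log {x y : ℝ} (hx : exp 2 ≤ x) (hxy : x ≤ y)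
    (hyx : y ≤ 2 * x) :
    log (log y) ≤ 2 * log (log x) := by
  have hx0 : 0 < x := (exp_pos 2).trans_le hx
  have hlx : 2 ≤ log x := (le_log_iff_exp_le hx0).2 hx
  have hly : log x ≤ log y := log_le_log hx0 hxy
  refine log_le_two_mul_log hlx (by linarith) (log_le_two_mul_log ?_ (by linarith) hyx)
  linarith [add_one_le_exp 2]

lemma log_log_log_le_two_mul_log_log_log {x y : ℝ} (hx : exp (exp 2) ≤ x) (hxy : x ≤ y)
    (hyx : y ≤ 2 * x) :
    log (log (log y)) ≤ 2 * log (log (log x)) := by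
  have hx0 : 0 < x := (exp_pos _).trans_le hx
  have hlx : exp 2 ≤ log x := (le_log_iff_exp_le hx0).2 hx
  have hllx : 2 ≤ log (log x) := le_log_log_of_exp_exp_le hx
  have hlly : log (log x) ≤ log (log y) :=
    log_le_log ((exp_pos 2).trans_le hlx) (log_le_log hx0 hxy)
  have hx2 : exp 2 ≤ x := (exp_le_exp.2 (by linarith [add_one_le_exp 2])).trans hx
  exact log_le_two_mul_log hllx (by linarith) (log_log_le_two_mul_log_log hx2 hxy hyx)

lemma mul_log_log_le {c x : ℝ} (hc : 0 ≤ c) (hx : exp (2 * c) ≤ x) :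
    c * log (log x) ≤ x := by
  have hx0 : 0 < x := (exp_pos _).trans_le hx
  have ht : 2 * c ≤ log x := (le_log_iff_exp_le hx0).2 hx
  calc c * log (log x) ≤ c * log x := mul_le_mul_of_nonneg_left (log_le_self (by linarith)) hc
    _ ≤ 1 + log x + log x ^ 2 / 2 := by nlinarith
    _ ≤ exp (log x) := quadratic_le_exp_of_nonneg (by linarith)
    _ = x := exp_log hx0

lemma div_le_log_log_log_sub_of_le_two_mul {x y : ℝ} (hx : exp 2 ≤ x) (hxy : x ≤ y)
    (hyx : y ≤ 2 * x) :
    (y - x) / (8 * (x * log x * log (log x))) ≤ log (log (log y)) - log (log (log x)) := by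
  have hx1 : exp 1 < x := (exp_lt_exp.2 one_lt_two).trans_le hx
  have hx0 : 0 < x := (exp_pos 2).trans_le hx
  have hlx : 2 ≤ log x := (le_log_iff_exp_le hx0).2 hx
  have hly : log x ≤ log y := log_le_log hx0 hxy
  have hllx : 0 < log (log x) := log_pos (by linarith)
  have hlly : log (log x) ≤ log (log y) := log_le_log (by linarith) hly
  have hden : y * log y * log (log y) ≤ 8 * (x * log x * log (log x)) := by
    have h1 := log_le_two_mul_log (by linarith [add_one_le_exp 2]) (by linarith) hyx
    have h2 := log_log_le_two_mul_log_log hx hxy hyx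
    calc y * log y * log (log y) ≤ (2 * x) * (2 * log x) * (2 * log (log x)) := by
          gcongr <;> linarith
      _ = 8 * (x * log x * log (log x)) := by ring
  have hpos : 0 < y * log y * log (log y) := by
    have : 0 < log y := by linarith
    have : 0 < log (log y) := by linarith
    have : 0 < y := by linarith
    positivity
  calc (y - x) / (8 * (x * log x * log (log x))) ≤ (y - x) / (y * log y * log (log y)) :=
        div_le_div_of_nonneg_left (by linarith) hpos hden
    _ ≤ log (log (log y)) - log (log (log x)) := div_le_log_log_log_sub hx1 hxy

lemma log_log_log_add_sub_le {c x : ℝ} (hc : 0 ≤ c) (hx : exp 1 < x) :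
    log (log (log (x + c * log (log x)))) - log (log (log x)) ≤ c / (x * log x) := by
  have hx0 : 0 < x := (exp_pos 1).trans hx
  have hlx : 1 < log x := (lt_log_iff_exp_lt hx0).2 hx
  have hllx : 0 < log (log x) := log_pos hlx
  calc _ ≤ (x + c * log (log x) - x) / (x * log x * log (log x)) :=
        log_log_log_sub_le hx (le_add_of_nonneg_right (by positivity))
    _ = c / (x * log x) := by field_simp; ring

lemma one_div_mul_log_le_log_log_log_add_sub {c x : ℝ} (hc : 0 < c) (hx : exp 2 ≤ x)
    (hcx : exp (2 * c) ≤ x) :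
    1 / (x * log x) ≤ 8 / c * (log (log (log (x + c * log (log x)))) - log (log (log x))) := by
  have hx0 : 0 < x := (exp_pos 2).trans_le hx
  have hlx : 2 ≤ log x := (le_log_iff_exp_le hx0).2 hx
  have hllx : 0 < log (log x) := log_pos (by linarith)
  calc 1 / (x * log x)
      = 8 / c * ((x + c * log (log x) - x) / (8 * (x * log x * log (log x)))) := by
        field_simp
        ring
    _ ≤ _ := by
        gcongr
        exact div_le_log_log_log_sub_of_le_two_mul hx (le_add_of_nonneg_right (by positivity))
          (by linarith [mul_log_log_le hc.le hcx])

lemma le_liminf_div_of_sub_le_mul {S F : ℕ → ℝ} {c C K : ℝ} (hc : 0 < c)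
    (hF : Tendsto F atTop atTop) (hlow : ∀ᶠ M in atTop, F M - K ≤ c * S M)
    (hup : ∀ᶠ M in atTop, S M ≤ C * F M) :
    1 / c ≤ liminf (fun M => S M / F M) atTop := by
  have hb : Tendsto (fun M => (1 - K / F M) / c) atTop (𝓝 (1 / c)) := by
    simpa using ((tendsto_const_nhds.div_atTop hF).const_sub 1).div_const c
  rw [← hb.liminf_eq]
  refine liminf_le_liminf ?_ hb.isBoundedUnder_ge
    (isCoboundedUnder_ge_of_eventually_le atTop (x := C) ?_)
  · filter_upwards [hlow, hF.eventually_gt_atTop 0] with M hM hFM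
    rw [one_sub_div hFM.ne', div_div, div_le_div_iff₀ (by positivity) hFM]
    nlinarith
  · filter_upwards [hup, hF.eventually_gt_atTop 0] with M hM hFM
    exact (div_le_iff₀ hFM).2 hM

lemma sub_le_sum_Icc_of_sub_le {a F : ℕ → ℝ} {m n : ℕ} (hmn : m ≤ n)
    (h : ∀ k ∈ Icc m n, F (k + 1) - F k ≤ a k) : F (n + 1) - F m ≤ ∑ k ∈ Icc m n, a k :=
  sum_Icc_sub hmn F ▸ sum_le_sum h

lemma sum_Icc_le_sub_of_le_sub {a F : ℕ → ℝ} {m n : ℕ} (hmn : m ≤ n)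
    (h : ∀ k ∈ Icc m n, a k ≤ F (k + 1) - F k) : ∑ k ∈ Icc m n, a k ≤ F (n + 1) - F m :=
  sum_Icc_sub hmn F ▸ sum_le_sum h

section Recursion

variable {N : ℕ → ℝ}

lemma exp_le_of_exp_exp_ten_le {a x : ℝ} (ha : a ≤ 20) (hx : exp (exp 10) ≤ x) :
    exp a ≤ x := by
  have h20 : (20 : ℝ) ≤ exp 10 := by
    have := quadratic_le_exp_of_nonneg (show (0 : ℝ) ≤ 10 by norm_num)
    norm_num at this
    linarith
  exact (exp_le_exp.2 (ha.trans h20)).trans hx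

lemma exp_exp_ten_add_le_of_rec (hinit : exp (exp 10) ≤ N 1)
    (hrec : ∀ k : ℕ, 1 ≤ k → N (k + 1) = N k + 10 * log (log (N k))) (k : ℕ) :
    exp (exp 10) + 100 * k ≤ N (k + 1) := by
  induction k with
  | zero => simpa using hinit
  | succ k ih =>
    have hN : exp (exp 10) ≤ N (k + 1) := by linarith [(by positivity : (0 : ℝ) ≤ 100 * k)]
    rw [hrec (k + 1) (by omega)]
    push_cast
    linarith [le_log_log_of_exp_exp_le hN]

lemma sub_le_mul_sum_of_rec (hN : ∀ k, 1 ≤ k → exp (exp 10) ≤ N k)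
    (hrec : ∀ k : ℕ, 1 ≤ k → N (k + 1) = N k + 10 * log (log (N k)))
    {M : ℕ} (hM : 1 ≤ M) :
    log (log (log (N M))) - log (log (log (N 1))) ≤
      10 * ∑ k ∈ Icc 1 M, 1 / (N k * log (N k)) := by
  have hexp : ∀ k, 1 ≤ k → exp 1 < N k := fun k hk =>
    (exp_lt_exp.2 one_lt_two).trans_le (exp_le_of_exp_exp_ten_le (by norm_num) (hN k hk))
  have hmono : log (log (log (N M))) ≤ log (log (log (N (M + 1)))) :=
    log_log_log_le_log_log_log (hexp M hM)
      (by rw [hrec M hM]; linarith [le_log_log_of_exp_exp_le (hN M hM)])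
  have htel := sub_le_sum_Icc_of_sub_le (F := fun k => log (log (log (N k))))
    (a := fun k => 10 * (1 / (N k * log (N k)))) hM fun k hk => by
      rw [hrec k (mem_Icc.1 hk).1, mul_one_div]
      exact log_log_log_add_sub_le (by norm_num) (hexp k (mem_Icc.1 hk).1)
  rw [mul_sum]
  linarith

lemma sum_le_mul_log_log_log_of_rec (hN : ∀ k, 1 ≤ k → exp (exp 10) ≤ N k)
    (hrec : ∀ k : ℕ, 1 ≤ k → N (k + 1) = N k + 10 * log (log (N k)))
    {M : ℕ} (hM : 1 ≤ M) :
    ∑ k ∈ Icc 1 M, 1 / (N k * log (N k)) ≤ 8 / 5 * log (log (log (N M))) := by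
  have htel := sum_Icc_le_sub_of_le_sub (F := fun k => 8 / 10 * log (log (log (N k))))
    (a := fun k => 1 / (N k * log (N k))) hM fun k hk => by
      have hNk := hN k (mem_Icc.1 hk).1
      rw [← mul_sub, hrec k (mem_Icc.1 hk).1]
      exact one_div_mul_log_le_log_log_log_add_sub (by norm_num)
        (exp_le_of_exp_exp_ten_le (by norm_num) hNk)
        (exp_le_of_exp_exp_ten_le (by norm_num) hNk)
  have hNM := hN M hM
  have hdouble : log (log (log (N (M + 1)))) ≤ 2 * log (log (log (N M))) := by
    refine log_log_log_le_two_mul_log_log_log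
      ((exp_le_exp.2 (exp_le_exp.2 (by norm_num))).trans hNM) ?_ ?_
    all_goals rw [hrec M hM]
    · linarith [le_log_log_of_exp_exp_le hNM]
    · linarith [mul_log_log_le (c := 10) (by norm_num)
        (exp_le_of_exp_exp_ten_le (by norm_num) hNM)]
  have hF1 : 0 ≤ log (log (log (N 1))) :=
    log_nonneg (by linarith [le_log_log_of_exp_exp_le (hN 1 le_rfl)])
  linarith

end Recursion

/-- Let `N₁ ≥ e^{e^{10}}` and `N_{k+1} = N_k + 10 log log N_k` for `k ≥ 1`. Then
`N_M → ∞` and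
`liminf_{M→∞} (Σ_{k=1}^M 1/(N_k log N_k)) / (log log log N_M) ≥ 1/10`. -/
theorem recursive_sequence_liminf (N : ℕ → ℝ)
    (hinit : Real.exp (Real.exp 10) ≤ N 1)
    (hrec : ∀ k : ℕ, 1 ≤ k → N (k + 1) = N k + 10 * Real.log (Real.log (N k))) :
    Tendsto N atTop atTop ∧
      (1 / 10 : ℝ) ≤ atTop.liminf fun M : ℕ =>
        (∑ k ∈ Finset.Icc 1 M, 1 / (N k * Real.log (N k))) /
          Real.log (Real.log (Real.log (N M))) := by
  have hgrowth := exp_exp_ten_add_le_of_rec hinit hrec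
  have hN : ∀ k, 1 ≤ k → exp (exp 10) ≤ N k := fun k hk => by
    obtain ⟨j, rfl⟩ := Nat.exists_eq_add_of_le' hk
    linarith [hgrowth j, (by positivity : (0 : ℝ) ≤ 100 * j)]
  have hNtend : Tendsto N atTop atTop := by
    rw [← tendsto_add_atTop_iff_nat 1]
    refine tendsto_atTop_mono hgrowth (tendsto_atTop_add_const_left _ _ ?_)
    exact tendsto_natCast_atTop_atTop.const_mul_atTop (by norm_num)
  refine ⟨hNtend, le_liminf_div_of_sub_le_mul (K := log (log (log (N 1)))) (C := 8 / 5)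
    (by norm_num) (tendsto_log_atTop.comp (tendsto_log_atTop.comp (tendsto_log_atTop.comp hNtend)))
    ?_ ?_⟩
  · filter_upwards [eventually_ge_atTop 1] with M hM using sub_le_mul_sum_of_rec hN hrec hM
  · filter_upwards [eventually_ge_atTop 1] with M hM using sum_le_mul_log_log_log_of_rec hN hrec hM
end
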